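/- arXiv:2512.02734 — 13 statements merged into one kernel-verified Lean document; each statement's English description precedes it below -/
import Mathlib

section
/- Let A = (a_{ijkl}) be an m×n diagonally dominated symmetric biquadratic tensor. Then A is an SOS tensor: there exist finitely many bilinear forms f_1, …, f_r, with f_p(x,y) = ∑_{i=1}^m ∑_{j=1}^n w^p_{ij} x_i y_j for real coefficients w^p_{ij}, such that for all x ∈ ℝ^m and y ∈ ℝ^n, ∑_{i,k=1}^m ∑_{j,l=1}^n a_{ijkl} x_i x_k y_j y_l = ∑_{p=1}^r f_p(x,y)². -/
open Finset

lemma quad_nonneg_of_diag_dom {I : Type*} [Fintype I] [DecidableEq I]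
    (M : Matrix I I ℝ) (hs : ∀ p q, M p q = M q p)
    (hd : ∀ p, (∑ q, |if q = p then (0:ℝ) else M p q|) ≤ M p p)
    (z : I → ℝ) : 0 ≤ ∑ p, ∑ q, M p q * z p * z q := by
  set N : I → I → ℝ := fun p q => if q = p then (0:ℝ) else M p q with hN
  have hNs : ∀ p q, N p q = N q p := by
    intro p q
    simp only [hN]
    by_cases h : q = p
    · subst h; rfl
    · rw [if_neg h, if_neg (fun h' => h h'.symm), hs p q]
  have split : ∀ p, ∑ q, M p q * z p * z q
      = M p p * z p * z p + ∑ q, N p q * z p * z q := by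
    intro p
    have : ∀ q, M p q * z p * z q
        = (if q = p then M p p * z p * z q else 0) + N p q * z p * z q := by
      intro q
      by_cases h : q = p
      · subst h; simp [hN]
      · simp [hN, h]
    rw [Finset.sum_congr rfl fun q _ => this q, Finset.sum_add_distrib,
      Finset.sum_ite_eq' Finset.univ p (fun q => M p p * z p * z q)]
    simp
  have key : ∀ p q, -(|N p q| * z p ^ 2 / 2 + |N p q| * z q ^ 2 / 2)
      ≤ N p q * z p * z q := by
    intro p q
    rcases le_or_gt 0 (N p q) with h | h
    · have habs : |N p q| = N p q := abs_of_nonneg h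
      nlinarith [sq_nonneg (z p + z q), sq_nonneg (z p - z q)]
    · have habs : |N p q| = -N p q := abs_of_neg h
      nlinarith [sq_nonneg (z p + z q), sq_nonneg (z p - z q)]
  have hbound : -∑ p, ∑ q, (|N p q| * z p ^ 2 / 2 + |N p q| * z q ^ 2 / 2)
      ≤ ∑ p, ∑ q, N p q * z p * z q := by
    rw [← Finset.sum_neg_distrib]
    refine Finset.sum_le_sum fun p _ => ?_
    rw [← Finset.sum_neg_distrib]
    exact Finset.sum_le_sum fun q _ => key p q
  have hswap : ∑ p, ∑ q, |N p q| * z q ^ 2 / 2 = ∑ p, ∑ q, |N p q| * z p ^ 2 / 2 := by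
    rw [Finset.sum_comm]
    refine Finset.sum_congr rfl fun p _ => Finset.sum_congr rfl fun q _ => ?_
    rw [hNs q p]
  have hsum : ∑ p, ∑ q, (|N p q| * z p ^ 2 / 2 + |N p q| * z q ^ 2 / 2)
      = ∑ p, (∑ q, |N p q|) * z p ^ 2 := by
    simp_rw [Finset.sum_add_distrib]
    rw [hswap]
    rw [← Finset.sum_add_distrib]
    refine Finset.sum_congr rfl fun p _ => ?_
    rw [← Finset.sum_add_distrib, Finset.sum_mul]
    refine Finset.sum_congr rfl fun q _ => ?_
    ring
  have hfin : 0 ≤ ∑ p, (M p p - ∑ q, |N p q|) * z p ^ 2 := by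
    refine Finset.sum_nonneg fun p _ => ?_
    have h1 := hd p
    have h2 := sq_nonneg (z p)
    nlinarith
  have hsplit : ∑ p, ∑ q, M p q * z p * z q
      = ∑ p, M p p * z p * z p + ∑ p, ∑ q, N p q * z p * z q := by
    rw [Finset.sum_congr rfl fun p _ => split p, Finset.sum_add_distrib]
  have h3 : ∑ p, (M p p - ∑ q, |N p q|) * z p ^ 2
      = ∑ p, M p p * z p * z p - ∑ p, (∑ q, |N p q|) * z p ^ 2 := by
    rw [← Finset.sum_sub_distrib]
    exact Finset.sum_congr rfl fun p _ => by ring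
  rw [hsplit]
  rw [hsum] at hbound
  linarith [hfin, h3 ▸ hfin]

/-- A diagonally dominated symmetric biquadratic tensor is an SOS tensor. -/
theorem diagonally_dominated_symmetric_is_SOS (m n : ℕ)
    (A : Fin m → Fin n → Fin m → Fin n → ℝ)
    (hsym : ∀ i k j l, A i j k l = A k j i l ∧ A i j k l = A k l i j)
    (hdom : ∀ i j, A i j i j ≥ (1/2) * ∑ i₂, ((∑ j₂, |if i = i₂ ∧ j = j₂ then (0:ℝ) else A i j i₂ j₂|)
        + ∑ j₁, |if i = i₂ ∧ j₁ = j then (0:ℝ) else A i j₁ i₂ j|)) :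
    ∃ (r : ℕ) (w : Fin r → Fin m → Fin n → ℝ), ∀ (x : Fin m → ℝ) (y : Fin n → ℝ),
      ∑ i, ∑ k, ∑ j, ∑ l, A i j k l * x i * x k * y j * y l
        = ∑ p, (∑ i, ∑ j, w p i j * x i * y j) ^ 2 := by
  set M : Matrix (Fin m × Fin n) (Fin m × Fin n) ℝ :=
    fun p q => A p.1 p.2 q.1 q.2 with hM
  have hs : ∀ p q, M p q = M q p := fun p q => (hsym p.1 q.1 p.2 q.2).2
  -- rewrite second inner sum of hdom into the first
  have hAeq : ∀ (i i₂ : Fin m) (j j₁ : Fin n), A i j₁ i₂ j = A i j i₂ j₁ := by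
    intro i i₂ j j₁
    rw [(hsym i i₂ j₁ j).1, (hsym i₂ i j₁ j).2]
  have hd : ∀ p, (∑ q, |if q = p then (0:ℝ) else M p q|) ≤ M p p := by
    rintro ⟨i, j⟩
    have h2 : ∀ i₂ : Fin m, (∑ j₁, |if i = i₂ ∧ j₁ = j then (0:ℝ) else A i j₁ i₂ j|)
        = ∑ j₂, |if i = i₂ ∧ j = j₂ then (0:ℝ) else A i j i₂ j₂| := by
      intro i₂
      refine Finset.sum_congr rfl fun j₁ _ => ?_
      rw [hAeq i i₂ j j₁]
      congr 1
      simp [eq_comm]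
    have hdom' := hdom i j
    simp only [h2] at hdom'
    have hsum2 : (1/2 : ℝ) * ∑ i₂, ((∑ j₂, |if i = i₂ ∧ j = j₂ then (0:ℝ) else A i j i₂ j₂|)
        + ∑ j₂, |if i = i₂ ∧ j = j₂ then (0:ℝ) else A i j i₂ j₂|)
        = ∑ i₂, ∑ j₂, |if i = i₂ ∧ j = j₂ then (0:ℝ) else A i j i₂ j₂| := by
      rw [Finset.mul_sum]
      refine Finset.sum_congr rfl fun i₂ _ => by ring
    rw [hsum2] at hdom'
    calc (∑ q, |if q = (i, j) then (0:ℝ) else M (i, j) q|)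
        = ∑ i₂, ∑ j₂, |if i = i₂ ∧ j = j₂ then (0:ℝ) else A i j i₂ j₂| := by
          rw [Fintype.sum_prod_type]
          refine Finset.sum_congr rfl fun i₂ _ => Finset.sum_congr rfl fun j₂ _ => ?_
          congr 1
          simp only [hM, Prod.mk.injEq]
          by_cases h : i₂ = i ∧ j₂ = j
          · simp [h.1, h.2]
          · rw [if_neg h, if_neg]
            rintro ⟨h1, h2⟩
            exact h ⟨h1.symm, h2.symm⟩
      _ ≤ M (i, j) (i, j) := hdom'
  -- positive semidefinite
  have hpsd : M.PosSemidef := by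
    refine Matrix.posSemidef_iff_dotProduct_mulVec.mpr ?_
    constructor
    · ext p q
      simp only [Matrix.conjTranspose_apply, star_trivial]
      exact hs q p
    · intro v
      have : dotProduct (star v) (M.mulVec v) = ∑ p, ∑ q, M p q * v p * v q := by
        simp only [dotProduct, Matrix.mulVec, dotProduct, star_trivial,
          Pi.star_apply, Finset.mul_sum]
        exact Finset.sum_congr rfl fun p _ => Finset.sum_congr rfl fun q _ => by ring
      rw [this]
      exact quad_nonneg_of_diag_dom M hs hd v
  obtain ⟨B, hB⟩ : ∃ B : Matrix (Fin m × Fin n) (Fin m × Fin n) ℝ, M = B.conjTranspose * B := by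
    open MatrixOrder in exact CStarAlgebra.nonneg_iff_eq_star_mul_self.mp hpsd.nonneg
  refine ⟨m * n, fun p i j => B (finProdFinEquiv.symm p) (i, j), fun x y => ?_⟩
  set z : Fin m × Fin n → ℝ := fun p => x p.1 * y p.2 with hz
  have step1 : ∑ i, ∑ k, ∑ j, ∑ l, A i j k l * x i * x k * y j * y l
      = ∑ p, ∑ q, M p q * z p * z q := by
    simp only [Fintype.sum_prod_type]
    refine Finset.sum_congr rfl fun i _ => ?_
    rw [Finset.sum_comm]
    refine Finset.sum_congr rfl fun j _ => Finset.sum_congr rfl fun k _ => ?_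
    refine Finset.sum_congr rfl fun l _ => ?_
    simp only [hM, hz]
    ring
  have hMe : ∀ p q, M p q = ∑ s, B s p * B s q := by
    intro p q
    rw [hB]
    simp [Matrix.mul_apply, Matrix.conjTranspose_apply]
  have step2 : ∑ p, ∑ q, M p q * z p * z q = ∑ s, (∑ q, B s q * z q) ^ 2 := by
    have e1 : ∀ s : Fin m × Fin n, (∑ q, B s q * z q) ^ 2
        = ∑ p, ∑ q, B s p * B s q * z p * z q := by
      intro s
      rw [sq, Finset.sum_mul_sum]
      exact Finset.sum_congr rfl fun p _ => Finset.sum_congr rfl fun q _ => by ring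
    have e2 : ∑ s : Fin m × Fin n, ∑ p, ∑ q, B s p * B s q * z p * z q
        = ∑ p, ∑ q, ∑ s, B s p * B s q * z p * z q := by
      rw [Finset.sum_comm]
      exact Finset.sum_congr rfl fun p _ => Finset.sum_comm
    simp_rw [e1]
    rw [e2]
    refine Finset.sum_congr rfl fun p _ => Finset.sum_congr rfl fun q _ => ?_
    rw [hMe p q, Finset.sum_mul, Finset.sum_mul]
  have inner : ∀ s : Fin m × Fin n, ∑ q, B s q * z q
      = ∑ i, ∑ j, B s (i, j) * x i * y j := by
    intro s
    rw [Fintype.sum_prod_type]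
    exact Finset.sum_congr rfl fun i _ => Finset.sum_congr rfl fun j _ => by
      simp [hz, mul_assoc]
  have step3 : ∑ s : Fin m × Fin n, (∑ q, B s q * z q) ^ 2
      = ∑ p : Fin (m * n), (∑ i, ∑ j, B (finProdFinEquiv.symm p) (i, j) * x i * y j) ^ 2 := by
    simp_rw [inner]
    exact (Equiv.sum_comp finProdFinEquiv.symm
      (fun s => (∑ i, ∑ j, B s (i, j) * x i * y j) ^ 2)).symm
  rw [step1, step2, step3]
end

section
/- Let A = (a_{ijkl}) be an m×n diagonally dominated symmetric biquadratic tensor. Then A is positive semi-definite: for all x ∈ ℝ^m and y ∈ ℝ^n, ∑_{i,k=1}^m ∑_{j,l=1}^n a_{ijkl} x_i x_k y_j y_l ≥ 0. -/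
open Finset

private def Bm {m n : ℕ} (A : Fin m → Fin n → Fin m → Fin n → ℝ)
    (i : Fin m) (j : Fin n) (k : Fin m) (l : Fin n) : ℝ :=
  if i = k ∧ j = l then 0 else A i j k l

private lemma key_swap {m n : ℕ} (f : Fin m → Fin n → Fin m → Fin n → ℝ) :
    ∑ i, ∑ k, ∑ j, ∑ l, f i j k l = ∑ i, ∑ k, ∑ j, ∑ l, f k l i j := by
  rw [Finset.sum_comm]
  exact Finset.sum_congr rfl fun k _ => Finset.sum_congr rfl fun i _ =>
    Finset.sum_comm

private lemma pt_bound (a p q : ℝ) : -(|a| / 2) * (p ^ 2 + q ^ 2) ≤ a * (p * q) := by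
  have h1 : -(|a| * |p * q|) ≤ a * (p * q) := by
    have := neg_abs_le (a * (p * q))
    rwa [abs_mul] at this
  have h2 : |p * q| ≤ (p ^ 2 + q ^ 2) / 2 := by
    rw [abs_mul]
    nlinarith [sq_nonneg (|p| - |q|), sq_abs p, sq_abs q, abs_nonneg p, abs_nonneg q]
  nlinarith [mul_le_mul_of_nonneg_left h2 (abs_nonneg a)]

/-- A diagonally dominated symmetric biquadratic tensor is positive semi-definite. -/
theorem diagonally_dominated_symmetric_is_PSD (m n : ℕ)
    (A : Fin m → Fin n → Fin m → Fin n → ℝ)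
    (hsym : ∀ i k j l, A i j k l = A k j i l ∧ A i j k l = A k l i j)
    (hdom : ∀ i j, A i j i j ≥ (1/2) * ∑ i₂, ((∑ j₂, |if i = i₂ ∧ j = j₂ then (0:ℝ) else A i j i₂ j₂|)
        + ∑ j₁, |if i = i₂ ∧ j₁ = j then (0:ℝ) else A i j₁ i₂ j|)) :
    ∀ (x : Fin m → ℝ) (y : Fin n → ℝ),
      ∑ i, ∑ k, ∑ j, ∑ l, A i j k l * x i * x k * y j * y l ≥ 0 := by
  intro x y
  have hBsymm : ∀ i j k l, |Bm A k l i j| = |Bm A i j k l| := by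
    intro i j k l
    simp only [Bm]
    have hA : A k l i j = A i j k l := ((hsym i k j l).2).symm
    by_cases h : i = k ∧ j = l
    · obtain ⟨rfl, rfl⟩ := h; simp
    · have h' : ¬(k = i ∧ l = j) := fun hc => h ⟨hc.1.symm, hc.2.symm⟩
      simp [h, h', hA]
  have hdom' : ∀ i j, ∑ k, ∑ l, |Bm A i j k l| ≤ A i j i j := by
    intro i j
    have h2 : ∀ i₂ : Fin m, (∑ j₁, |if i = i₂ ∧ j₁ = j then (0:ℝ) else A i j₁ i₂ j|)
        = ∑ j₂, |Bm A i j i₂ j₂| := by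
      intro i₂
      refine Finset.sum_congr rfl fun j₁ _ => ?_
      have hA : A i j₁ i₂ j = A i j i₂ j₁ := by
        rw [(hsym i i₂ j₁ j).1, (hsym i₂ i j₁ j).2]
      simp only [Bm]
      by_cases h : i = i₂ ∧ j₁ = j
      · obtain ⟨rfl, rfl⟩ := h; simp
      · have h' : ¬(i = i₂ ∧ j = j₁) := fun hc => h ⟨hc.1, hc.2.symm⟩
        simp [h, h', hA]
    calc ∑ k, ∑ l, |Bm A i j k l|
        = (1/2) * ∑ i₂, ((∑ j₂, |if i = i₂ ∧ j = j₂ then (0:ℝ) else A i j i₂ j₂|)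
            + ∑ j₁, |if i = i₂ ∧ j₁ = j then (0:ℝ) else A i j₁ i₂ j|) := by
          rw [Finset.mul_sum]
          refine Finset.sum_congr rfl fun i₂ _ => ?_
          rw [h2 i₂]
          simp only [Bm]
          ring
      _ ≤ A i j i j := hdom i j
  have hlow : ∀ (i k : Fin m) (j l : Fin n),
      (if i = k ∧ j = l then A i j i j else 0) * (x i * y j) ^ 2
        - |Bm A i j k l| / 2 * ((x i * y j) ^ 2 + (x k * y l) ^ 2)
      ≤ A i j k l * x i * x k * y j * y l := by
    intro i k j l
    have hprod : A i j k l * x i * x k * y j * y l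
        = A i j k l * ((x i * y j) * (x k * y l)) := by ring
    rw [hprod]
    by_cases h : i = k ∧ j = l
    · obtain ⟨rfl, rfl⟩ := h
      have hb : Bm A i j i j = 0 := if_pos ⟨rfl, rfl⟩
      rw [if_pos (⟨rfl, rfl⟩ : i = i ∧ j = j), hb, abs_zero]
      apply le_of_eq
      ring
    · simp only [if_neg h, Bm, zero_mul, zero_sub]
      have := pt_bound (A i j k l) (x i * y j) (x k * y l)
      linarith
  have hmain : ∑ i, ∑ k, ∑ j, ∑ l,
      ((if i = k ∧ j = l then A i j i j else 0) * (x i * y j) ^ 2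
        - |Bm A i j k l| / 2 * ((x i * y j) ^ 2 + (x k * y l) ^ 2))
      ≤ ∑ i, ∑ k, ∑ j, ∑ l, A i j k l * x i * x k * y j * y l := by
    refine Finset.sum_le_sum fun i _ => Finset.sum_le_sum fun k _ =>
      Finset.sum_le_sum fun j _ => Finset.sum_le_sum fun l _ => hlow i k j l
  -- compute the lower sum
  have hsplit : ∑ i, ∑ k, ∑ j, ∑ l,
      ((if i = k ∧ j = l then A i j i j else 0) * (x i * y j) ^ 2
        - |Bm A i j k l| / 2 * ((x i * y j) ^ 2 + (x k * y l) ^ 2))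
      = (∑ i, ∑ k, ∑ j, ∑ l, (if i = k ∧ j = l then A i j i j else 0) * (x i * y j) ^ 2)
        - (∑ i, ∑ k, ∑ j, ∑ l, |Bm A i j k l| / 2 * (x i * y j) ^ 2)
        - (∑ i, ∑ k, ∑ j, ∑ l, |Bm A i j k l| / 2 * (x k * y l) ^ 2) := by
    simp only [← Finset.sum_sub_distrib]
    refine Finset.sum_congr rfl fun i _ => Finset.sum_congr rfl fun k _ =>
      Finset.sum_congr rfl fun j _ => Finset.sum_congr rfl fun l _ => by ring
  have hT1 : ∑ i, ∑ k, ∑ j, ∑ l, (if i = k ∧ j = l then A i j i j else 0) * (x i * y j) ^ 2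
      = ∑ i, ∑ j, A i j i j * (x i * y j) ^ 2 := by
    refine Finset.sum_congr rfl fun i _ => ?_
    rw [Finset.sum_comm]
    refine Finset.sum_congr rfl fun j _ => ?_
    simp [ite_and, Finset.sum_ite_eq, mul_ite, ite_mul]
  have hT3 : ∑ i, ∑ k, ∑ j, ∑ l, |Bm A i j k l| / 2 * (x k * y l) ^ 2
      = ∑ i, ∑ k, ∑ j, ∑ l, |Bm A i j k l| / 2 * (x i * y j) ^ 2 := by
    rw [key_swap (fun i j k l => |Bm A i j k l| / 2 * (x k * y l) ^ 2)]
    refine Finset.sum_congr rfl fun i _ => Finset.sum_congr rfl fun k _ =>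
      Finset.sum_congr rfl fun j _ => Finset.sum_congr rfl fun l _ => ?_
    rw [hBsymm]
  have hT2 : ∑ i, ∑ k, ∑ j, ∑ l, |Bm A i j k l| / 2 * (x i * y j) ^ 2
      = ∑ i, ∑ j, (∑ k, ∑ l, |Bm A i j k l| / 2) * (x i * y j) ^ 2 := by
    refine Finset.sum_congr rfl fun i _ => ?_
    rw [Finset.sum_comm]
    refine Finset.sum_congr rfl fun j _ => ?_
    rw [Finset.sum_mul]
    refine Finset.sum_congr rfl fun k _ => ?_
    rw [Finset.sum_mul]
  have hfin : 0 ≤ ∑ i, ∑ j, A i j i j * (x i * y j) ^ 2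
      - ∑ i, ∑ j, (∑ k, ∑ l, |Bm A i j k l| / 2) * (x i * y j) ^ 2
      - ∑ i, ∑ j, (∑ k, ∑ l, |Bm A i j k l| / 2) * (x i * y j) ^ 2 := by
    have : ∑ i, ∑ j, A i j i j * (x i * y j) ^ 2
      - ∑ i, ∑ j, (∑ k, ∑ l, |Bm A i j k l| / 2) * (x i * y j) ^ 2
      - ∑ i, ∑ j, (∑ k, ∑ l, |Bm A i j k l| / 2) * (x i * y j) ^ 2
      = ∑ i, ∑ j, (A i j i j - ∑ k, ∑ l, |Bm A i j k l|) * (x i * y j) ^ 2 := by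
      simp only [← Finset.sum_sub_distrib]
      refine Finset.sum_congr rfl fun i _ => Finset.sum_congr rfl fun j _ => ?_
      rw [show (∑ k, ∑ l, |Bm A i j k l| / 2) = (∑ k, ∑ l, |Bm A i j k l|) / 2 by
        rw [Finset.sum_div]; exact Finset.sum_congr rfl fun k _ => (Finset.sum_div _ _ _).symm]
      ring
    rw [this]
    refine Finset.sum_nonneg fun i _ => Finset.sum_nonneg fun j _ => ?_
    exact mul_nonneg (by linarith [hdom' i j]) (sq_nonneg _)
  rw [ge_iff_le]
  calc (0:ℝ) ≤ _ := hfin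
    _ = ∑ i, ∑ k, ∑ j, ∑ l,
      ((if i = k ∧ j = l then A i j i j else 0) * (x i * y j) ^ 2
        - |Bm A i j k l| / 2 * ((x i * y j) ^ 2 + (x k * y l) ^ 2)) := by
        rw [hsplit, hT1, hT3, hT2]
    _ ≤ _ := hmain
end

section
/- Let m, n ≥ 2 and let P be the m×n monic symmetric biquadratic form with parameters a, b, c ∈ ℝ. Then P(x,y) ≥ 0 for all x ∈ ℝ^m, y ∈ ℝ^n if and only if all of the following hold: (i) 1 − b + (m−1)(a−c) ≥ 0; (ii) 1 − a + (n−1)(b−c) ≥ 0; (iii) 1 − a − b + c ≥ 0; (iv) 1 + (m−1)a + (n−1)b + (m−1)(n−1)c ≥ 0; (v) whenever c ≠ 0, a/c ∈ [1−n, 1), and b/c ∈ [1−m, 1), one has 1 − ab/c ≥ 0. -/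
open Finset

/-- The m×n monic symmetric biquadratic form with parameters a, b, c. -/
noncomputable def monicForm (m n : ℕ) (a b c : ℝ) (x : Fin m → ℝ) (y : Fin n → ℝ) : ℝ :=
  (∑ i, ∑ j, (x i) ^ 2 * (y j) ^ 2)
  + a * ∑ i, ∑ k, ∑ j, (if i ≠ k then x i * x k * (y j) ^ 2 else 0)
  + b * ∑ i, ∑ j, ∑ l, (if j ≠ l then (x i) ^ 2 * y j * y l else 0)
  + c * ∑ i, ∑ k, ∑ j, ∑ l, (if i ≠ k ∧ j ≠ l then x i * y j * x k * y l else 0)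

lemma sum_offdiag {k : ℕ} (x : Fin k → ℝ) :
    ∑ i, ∑ j, (if i ≠ j then x i * x j else 0) = (∑ i, x i) ^ 2 - ∑ i, (x i) ^ 2 := by
  have h : ∀ i j : Fin k, (if i ≠ j then x i * x j else 0)
      = x i * x j - (if i = j then x i * x j else 0) := by
    intro i j; by_cases h : i = j <;> simp [h]
  simp_rw [h, Finset.sum_sub_distrib, Finset.sum_ite_eq, Finset.mem_univ, if_true]
  rw [sq, Finset.sum_mul_sum]
  simp [sq]

lemma monicForm_eq (m n : ℕ) (a b c : ℝ) (x : Fin m → ℝ) (y : Fin n → ℝ) :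
    monicForm m n a b c x y =
      (∑ i, (x i) ^ 2) * (∑ j, (y j) ^ 2)
      + a * ((((∑ i, x i) ^ 2 - ∑ i, (x i) ^ 2)) * ∑ j, (y j) ^ 2)
      + b * ((∑ i, (x i) ^ 2) * ((∑ j, y j) ^ 2 - ∑ j, (y j) ^ 2))
      + c * ((((∑ i, x i) ^ 2 - ∑ i, (x i) ^ 2)) * ((∑ j, y j) ^ 2 - ∑ j, (y j) ^ 2)) := by
  unfold monicForm
  have h1 : ∑ i, ∑ j, (x i) ^ 2 * (y j) ^ 2 = (∑ i, (x i) ^ 2) * (∑ j, (y j) ^ 2) := by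
    rw [Finset.sum_mul_sum]
  have h2 : ∑ i, ∑ k, ∑ j, (if i ≠ k then x i * x k * (y j) ^ 2 else 0)
      = (((∑ i, x i) ^ 2 - ∑ i, (x i) ^ 2)) * ∑ j, (y j) ^ 2 := by
    have e : ∀ i k : Fin m, ∑ j, (if i ≠ k then x i * x k * (y j) ^ 2 else 0)
        = (if i ≠ k then x i * x k else 0) * ∑ j, (y j) ^ 2 := by
      intro i k; split_ifs with h <;> simp [Finset.mul_sum]
    simp_rw [e, ← Finset.sum_mul, sum_offdiag]
  have h3 : ∑ i, ∑ j, ∑ l, (if j ≠ l then (x i) ^ 2 * y j * y l else 0)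
      = (∑ i, (x i) ^ 2) * ((∑ j, y j) ^ 2 - ∑ j, (y j) ^ 2) := by
    have e : ∀ (i : Fin m) (j l : Fin n), (if j ≠ l then (x i) ^ 2 * y j * y l else 0)
        = (x i) ^ 2 * (if j ≠ l then y j * y l else 0) := by
      intro i j l; split_ifs <;> ring
    simp_rw [e, ← Finset.mul_sum, sum_offdiag, ← Finset.sum_mul]
  have h4 : ∑ i, ∑ k, ∑ j, ∑ l, (if i ≠ k ∧ j ≠ l then x i * y j * x k * y l else 0)
      = (((∑ i, x i) ^ 2 - ∑ i, (x i) ^ 2)) * ((∑ j, y j) ^ 2 - ∑ j, (y j) ^ 2) := by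
    have e : ∀ (i k : Fin m) (j l : Fin n),
        (if i ≠ k ∧ j ≠ l then x i * y j * x k * y l else 0)
        = (if i ≠ k then x i * x k else 0) * (if j ≠ l then y j * y l else 0) := by
      intro i k j l
      by_cases hik : i ≠ k <;> by_cases hjl : j ≠ l <;> simp [hik, hjl] <;> ring
    simp_rw [e, ← Finset.mul_sum, ← Finset.sum_mul, sum_offdiag]
  rw [h1, h2, h3, h4]

lemma key_nonneg (M N a b c p q s t : ℝ) (hM : 0 < M) (hN : 0 < N)
    (hq0 : 0 ≤ q) (hqm : q ≤ M * p) (ht0 : 0 ≤ t) (htn : t ≤ N * s)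
    (hC1 : 0 ≤ 1 - b + (M - 1) * (a - c)) (hC2 : 0 ≤ 1 - a + (N - 1) * (b - c))
    (hC3 : 0 ≤ 1 - a - b + c)
    (hC4 : 0 ≤ 1 + (M - 1) * a + (N - 1) * b + (M - 1) * (N - 1) * c) :
    0 ≤ p * s + a * ((q - p) * s) + b * (p * (t - s)) + c * ((q - p) * (t - s)) := by
  have hid : M * N * (p * s + a * ((q - p) * s) + b * (p * (t - s)) + c * ((q - p) * (t - s)))
      = (M * p - q) * (N * s - t) * (1 - a - b + c)
        + (M * p - q) * t * (1 - a + (N - 1) * (b - c))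
        + q * (N * s - t) * (1 - b + (M - 1) * (a - c))
        + q * t * (1 + (M - 1) * a + (N - 1) * b + (M - 1) * (N - 1) * c) := by ring
  have h1 : 0 ≤ (M * p - q) * (N * s - t) * (1 - a - b + c) :=
    mul_nonneg (mul_nonneg (by linarith) (by linarith)) hC3
  have h2 : 0 ≤ (M * p - q) * t * (1 - a + (N - 1) * (b - c)) :=
    mul_nonneg (mul_nonneg (by linarith) ht0) hC2
  have h3 : 0 ≤ q * (N * s - t) * (1 - b + (M - 1) * (a - c)) :=
    mul_nonneg (mul_nonneg hq0 (by linarith)) hC1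
  have h4 : 0 ≤ q * t * (1 + (M - 1) * a + (N - 1) * b + (M - 1) * (N - 1) * c) :=
    mul_nonneg (mul_nonneg hq0 ht0) hC4
  nlinarith [mul_pos hM hN, hid, h1, h2, h3, h4]

/-- a "±1 on two coordinates" test vector: sums to 0, sum of squares 2. -/
lemma test_vec_sums {k : ℕ} (hk : 2 ≤ k) :
    ∃ x : Fin k → ℝ, (∑ i, x i = 0) ∧ (∑ i, (x i) ^ 2 = 2) := by
  have h0 : (0 : ℕ) < k := by omega
  have h1 : (1 : ℕ) < k := by omega
  set i0 : Fin k := ⟨0, h0⟩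
  set i1 : Fin k := ⟨1, h1⟩
  have hne : i0 ≠ i1 := by simp [i0, i1, Fin.ext_iff]
  refine ⟨fun i => (if i = i0 then 1 else 0) - (if i = i1 then 1 else 0), ?_, ?_⟩
  · simp [Finset.sum_sub_distrib]
  · have e : ∀ i : Fin k, ((if i = i0 then (1:ℝ) else 0) - (if i = i1 then 1 else 0)) ^ 2
        = (if i = i0 then 1 else 0) + (if i = i1 then 1 else 0) := by
      intro i
      by_cases h0' : i = i0 <;> by_cases h1' : i = i1
      · exact absurd (h0' ▸ h1') hne
      · simp [h0', h1', hne, hne.symm]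
      · simp [h0', h1', hne, hne.symm]
      · simp [h0', h1']
    simp_rw [e, Finset.sum_add_distrib]
    simp
    norm_num

set_option maxHeartbeats 1600000 in
/-- necessary and sufficient conditions for PSD of a monic symmetric
biquadratic form. -/
theorem monic_symmetric_psd_iff (m n : ℕ) (hm : 2 ≤ m) (hn : 2 ≤ n) (a b c : ℝ) :
    (∀ (x : Fin m → ℝ) (y : Fin n → ℝ), 0 ≤ monicForm m n a b c x y) ↔
      (1 - b + ((m : ℝ) - 1) * (a - c) ≥ 0 ∧
       1 - a + ((n : ℝ) - 1) * (b - c) ≥ 0 ∧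
       1 - a - b + c ≥ 0 ∧
       1 + ((m : ℝ) - 1) * a + ((n : ℝ) - 1) * b + ((m : ℝ) - 1) * ((n : ℝ) - 1) * c ≥ 0 ∧
       (c ≠ 0 → a / c ∈ Set.Ico (1 - (n : ℝ)) 1 → b / c ∈ Set.Ico (1 - (m : ℝ)) 1 →
          1 - a * b / c ≥ 0)) := by
  have hM2 : (2 : ℝ) ≤ (m : ℝ) := by exact_mod_cast hm
  have hN2 : (2 : ℝ) ≤ (n : ℝ) := by exact_mod_cast hn
  have hM0 : (0 : ℝ) < (m : ℝ) := by linarith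
  have hN0 : (0 : ℝ) < (n : ℝ) := by linarith
  constructor
  · intro h
    obtain ⟨xv, hx0, hx2⟩ := test_vec_sums hm
    obtain ⟨yv, hy0, hy2⟩ := test_vec_sums hn
    -- all-ones vectors
    have hones_x : (∑ _i : Fin m, (1:ℝ)) = (m:ℝ) := by simp
    have hones_x2 : (∑ _i : Fin m, (1:ℝ)^2) = (m:ℝ) := by simp
    have hones_y : (∑ _j : Fin n, (1:ℝ)) = (n:ℝ) := by simp
    have hones_y2 : (∑ _j : Fin n, (1:ℝ)^2) = (n:ℝ) := by simp
    have hC3 : 1 - a - b + c ≥ 0 := by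
      have := h xv yv
      rw [monicForm_eq, hx0, hx2, hy0, hy2] at this
      nlinarith [this]
    have hC1 : 1 - b + ((m:ℝ) - 1) * (a - c) ≥ 0 := by
      have := h (fun _ => 1) yv
      rw [monicForm_eq] at this
      simp only [one_pow] at this
      rw [hones_x, hy0, hy2] at this
      nlinarith [this, hM0]
    have hC2 : 1 - a + ((n:ℝ) - 1) * (b - c) ≥ 0 := by
      have := h xv (fun _ => 1)
      rw [monicForm_eq] at this
      simp only [one_pow] at this
      rw [hx0, hx2, hones_y] at this
      nlinarith [this, hN0]
    have hC4 : 1 + ((m:ℝ) - 1) * a + ((n:ℝ) - 1) * b + ((m:ℝ) - 1) * ((n:ℝ) - 1) * c ≥ 0 := by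
      have := h (fun _ => 1) (fun _ => 1)
      rw [monicForm_eq] at this
      simp only [one_pow, Finset.sum_const, Finset.card_univ, Fintype.card_fin, nsmul_eq_mul,
        mul_one] at this
      nlinarith [this, mul_pos hM0 hN0]
    refine ⟨hC1, hC2, hC3, hC4, ?_⟩
    intro hc ha hb
    obtain ⟨ha1, ha2⟩ := ha
    obtain ⟨hb1, hb2⟩ := hb
    rcases lt_trichotomy c 0 with hc0 | hc0 | hc0
    · -- c < 0 : use C3
      have hac : c < a := by
        have := mul_lt_mul_of_neg_right ha2 hc0
        rw [div_mul_cancel₀ _ (ne_of_lt hc0)] at this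
        linarith
      have hbc : c < b := by
        have := mul_lt_mul_of_neg_right hb2 hc0
        rw [div_mul_cancel₀ _ (ne_of_lt hc0)] at this
        linarith
      have hab : c ≤ a * b := by
        nlinarith [mul_nonneg (neg_nonneg.2 hc0.le) hC3.le,
          mul_nonneg (sub_nonneg.2 hac.le) (sub_nonneg.2 hbc.le)]
      have : 1 - a * b / c = (c - a * b) / c := by field_simp
      rw [this, ge_iff_le]
      exact div_nonneg_iff.2 (Or.inr ⟨by linarith, hc0.le⟩)
    · exact absurd hc0 hc
    · -- c > 0 : use C2
      have hac : a < c := by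
        have := mul_lt_mul_of_pos_right ha2 hc0
        rw [div_mul_cancel₀ _ (ne_of_gt hc0)] at this
        linarith
      have hbc : b < c := by
        have := mul_lt_mul_of_pos_right hb2 hc0
        rw [div_mul_cancel₀ _ (ne_of_gt hc0)] at this
        linarith
      have ha1' : (1 - (n:ℝ)) * c ≤ a := by
        have := mul_le_mul_of_nonneg_right ha1 hc0.le
        rw [div_mul_cancel₀ _ (ne_of_gt hc0)] at this
        linarith
      have hab : a * b ≤ c := by
        nlinarith [mul_nonneg hc0.le hC2.le,
          mul_nonneg (sub_nonneg.2 hbc.le) (sub_nonneg.2 ha1')]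
      have : 1 - a * b / c = (c - a * b) / c := by field_simp
      rw [this, ge_iff_le]
      exact div_nonneg (by linarith) hc0.le
  · rintro ⟨hC1, hC2, hC3, hC4, -⟩ x y
    rw [monicForm_eq]
    have hq : ((∑ i, x i) ^ 2) ≤ (m : ℝ) * ∑ i, (x i) ^ 2 := by
      have := sq_sum_le_card_mul_sum_sq (s := (Finset.univ : Finset (Fin m))) (f := x)
      simpa using this
    have ht : ((∑ j, y j) ^ 2) ≤ (n : ℝ) * ∑ j, (y j) ^ 2 := by
      have := sq_sum_le_card_mul_sum_sq (s := (Finset.univ : Finset (Fin n))) (f := y)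
      simpa using this
    exact key_nonneg (m : ℝ) (n : ℝ) a b c (∑ i, (x i) ^ 2) ((∑ i, x i) ^ 2)
      (∑ j, (y j) ^ 2) ((∑ j, y j) ^ 2) hM0 hN0 (sq_nonneg _) hq (sq_nonneg _) ht
      hC1 hC2 hC3 hC4
end

section
/- Let m, n ≥ 2. The set of points (a,b,c) ∈ ℝ³ satisfying the four inequalities 1 − b + (m−1)(a−c) ≥ 0, 1 − a + (n−1)(b−c) ≥ 0, 1 − a − b + c ≥ 0, and 1 + (m−1)a + (n−1)b + (m−1)(n−1)c ≥ 0 is exactly the convex hull of the four points V₁ = (1, 1, 1), V₂ = (−1/(m−1), −1/(n−1), 1/((m−1)(n−1))), V₃ = (−1/(m−1), 1, −1/(m−1)), and V₄ = (1, −1/(n−1), −1/(n−1)). -/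
set_option maxHeartbeats 1000000


/-- the region cut out by the four linear inequalities is exactly the convex
hull (a tetrahedron) of the four vertices V₁, V₂, V₃, V₄. -/
theorem psd_region_eq_convexHull (m n : ℕ) (hm : 2 ≤ m) (hn : 2 ≤ n) :
    {p : ℝ × ℝ × ℝ |
        1 - p.2.1 + ((m : ℝ) - 1) * (p.1 - p.2.2) ≥ 0 ∧
        1 - p.1 + ((n : ℝ) - 1) * (p.2.1 - p.2.2) ≥ 0 ∧
        1 - p.1 - p.2.1 + p.2.2 ≥ 0 ∧
        1 + ((m : ℝ) - 1) * p.1 + ((n : ℝ) - 1) * p.2.1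
          + ((m : ℝ) - 1) * ((n : ℝ) - 1) * p.2.2 ≥ 0} =
      convexHull ℝ
        ({((1 : ℝ), (1 : ℝ), (1 : ℝ)),
          (-(1 / ((m : ℝ) - 1)), -(1 / ((n : ℝ) - 1)), 1 / (((m : ℝ) - 1) * ((n : ℝ) - 1))),
          (-(1 / ((m : ℝ) - 1)), 1, -(1 / ((m : ℝ) - 1))),
          (1, -(1 / ((n : ℝ) - 1)), -(1 / ((n : ℝ) - 1)))} : Set (ℝ × ℝ × ℝ)) := by
  have hm' : (2:ℝ) ≤ (m:ℝ) := by exact_mod_cast hm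
  have hn' : (2:ℝ) ≤ (n:ℝ) := by exact_mod_cast hn
  have hM : (0:ℝ) < (m:ℝ) - 1 := by linarith
  have hN : (0:ℝ) < (n:ℝ) - 1 := by linarith
  have hM0 : ((m:ℝ) - 1) ≠ 0 := ne_of_gt hM
  have hN0 : ((n:ℝ) - 1) ≠ 0 := ne_of_gt hN
  set M : ℝ := (m:ℝ) - 1 with hMdef
  set N : ℝ := (n:ℝ) - 1 with hNdef
  have hMinv : (0:ℝ) < 1 / M := by positivity
  have hNinv : (0:ℝ) < 1 / N := by positivity
  have e1 : M * (1/M) = 1 := by field_simp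
  have e2 : N * (1/N) = 1 := by field_simp
  have e3 : M * (1/(M*N)) = 1/N := by field_simp
  have e4 : N * (1/(M*N)) = 1/M := by field_simp
  have e5 : M * N * (1/(M*N)) = 1 := by field_simp
  set S : Set (ℝ × ℝ × ℝ) :=
      ({((1 : ℝ), (1 : ℝ), (1 : ℝ)),
        (-(1 / M), -(1 / N), 1 / (M * N)),
        (-(1 / M), 1, -(1 / M)),
        (1, -(1 / N), -(1 / N))} : Set (ℝ × ℝ × ℝ)) with hSdef
  apply Set.Subset.antisymm
  · rintro ⟨a, b, c⟩ ⟨h1, h2, h3, h4⟩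
    simp only [Set.mem_setOf_eq] at h1 h2 h3 h4 ⊢
    have hD : (0:ℝ) < (M + 1) * (N + 1) := by positivity
    have hD0 : ((M + 1) * (N + 1) : ℝ) ≠ 0 := ne_of_gt hD
    set w : Fin 4 → ℝ :=
      ![(1 + M * a + N * b + M * N * c) / ((M + 1) * (N + 1)),
        (1 - a - b + c) * (M * N) / ((M + 1) * (N + 1)),
        (1 - a + N * (b - c)) * M / ((M + 1) * (N + 1)),
        (1 - b + M * (a - c)) * N / ((M + 1) * (N + 1))] with hwdef
    set z : Fin 4 → ℝ × ℝ × ℝ :=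
      ![((1 : ℝ), (1 : ℝ), (1 : ℝ)),
        (-(1 / M), -(1 / N), 1 / (M * N)),
        (-(1 / M), 1, -(1 / M)),
        (1, -(1 / N), -(1 / N))] with hzdef
    have hw0 : ∀ i ∈ Finset.univ, 0 ≤ w i := by
      intro i _
      fin_cases i
      · show 0 ≤ (1 + M * a + N * b + M * N * c) / ((M + 1) * (N + 1))
        exact div_nonneg h4 hD.le
      · show 0 ≤ (1 - a - b + c) * (M * N) / ((M + 1) * (N + 1))
        exact div_nonneg (mul_nonneg h3 (mul_nonneg hM.le hN.le)) hD.le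
      · show 0 ≤ (1 - a + N * (b - c)) * M / ((M + 1) * (N + 1))
        exact div_nonneg (mul_nonneg h2 hM.le) hD.le
      · show 0 ≤ (1 - b + M * (a - c)) * N / ((M + 1) * (N + 1))
        exact div_nonneg (mul_nonneg h1 hN.le) hD.le
    have hw1 : ∑ i, w i = 1 := by
      rw [Fin.sum_univ_four]
      show (1 + M * a + N * b + M * N * c) / ((M + 1) * (N + 1))
          + (1 - a - b + c) * (M * N) / ((M + 1) * (N + 1))
          + (1 - a + N * (b - c)) * M / ((M + 1) * (N + 1))
          + (1 - b + M * (a - c)) * N / ((M + 1) * (N + 1)) = 1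
      field_simp
      ring
    have hz : ∀ i ∈ Finset.univ, z i ∈ convexHull ℝ S := by
      intro i _
      apply subset_convexHull
      fin_cases i
      · exact Set.mem_insert _ _
      · exact Set.mem_insert_of_mem _ (Set.mem_insert _ _)
      · exact Set.mem_insert_of_mem _ (Set.mem_insert_of_mem _ (Set.mem_insert _ _))
      · exact Set.mem_insert_of_mem _ (Set.mem_insert_of_mem _
          (Set.mem_insert_of_mem _ rfl))
    have hsum := (convex_convexHull ℝ S).sum_mem hw0 hw1 hz
    have heq : ∑ i, w i • z i = (a, b, c) := by
      rw [Fin.sum_univ_four]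
      show ((1 + M * a + N * b + M * N * c) / ((M + 1) * (N + 1))) • ((1 : ℝ), (1 : ℝ), (1 : ℝ))
          + ((1 - a - b + c) * (M * N) / ((M + 1) * (N + 1))) • (-(1 / M), -(1 / N), 1 / (M * N))
          + ((1 - a + N * (b - c)) * M / ((M + 1) * (N + 1))) • (-(1 / M), 1, -(1 / M))
          + ((1 - b + M * (a - c)) * N / ((M + 1) * (N + 1))) • (1, -(1 / N), -(1 / N))
          = (a, b, c)
      simp only [Prod.smul_mk, smul_eq_mul, Prod.mk_add_mk, Prod.mk.injEq]
      refine ⟨?_, ?_, ?_⟩ <;> field_simp <;> ring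
    rwa [heq] at hsum
  · apply convexHull_min
    · rintro q (rfl | rfl | rfl | rfl) <;>
        refine ⟨?_, ?_, ?_, ?_⟩ <;>
        simp only [Set.mem_setOf_eq] <;>
        nlinarith [e1, e2, e3, e4, e5, hM.le, hN.le, hMinv.le, hNinv.le,
          mul_pos hM hNinv, mul_pos hN hMinv]
    · rintro ⟨a1, b1, c1⟩ ⟨p1, p2, p3, p4⟩ ⟨a2, b2, c2⟩ ⟨q1, q2, q3, q4⟩ s t hs ht hst
      simp only [Set.mem_setOf_eq, Prod.smul_mk, Prod.mk_add_mk, smul_eq_mul] at *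
      refine ⟨?_, ?_, ?_, ?_⟩ <;>
        nlinarith [mul_nonneg hs p1, mul_nonneg ht q1, mul_nonneg hs p2, mul_nonneg ht q2,
          mul_nonneg hs p3, mul_nonneg ht q3, mul_nonneg hs p4, mul_nonneg ht q4]
end

section
/- Let m, n ≥ 2. If (a,b,c) ∈ ℝ³ satisfies the four inequalities 1 − b + (m−1)(a−c) ≥ 0, 1 − a + (n−1)(b−c) ≥ 0, 1 − a − b + c ≥ 0, and 1 + (m−1)a + (n−1)b + (m−1)(n−1)c ≥ 0, then a, b, c ∈ [−1, 1]. -/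
/-- the four linear inequalities imply a, b, c ∈ [-1, 1]. -/
theorem linear_ineqs_imply_bounds (m n : ℕ) (hm : 2 ≤ m) (hn : 2 ≤ n) (a b c : ℝ)
    (h1 : 1 - b + ((m : ℝ) - 1) * (a - c) ≥ 0)
    (h2 : 1 - a + ((n : ℝ) - 1) * (b - c) ≥ 0)
    (h3 : 1 - a - b + c ≥ 0)
    (h4 : 1 + ((m : ℝ) - 1) * a + ((n : ℝ) - 1) * b
        + ((m : ℝ) - 1) * ((n : ℝ) - 1) * c ≥ 0) :
    a ∈ Set.Icc (-1 : ℝ) 1 ∧ b ∈ Set.Icc (-1 : ℝ) 1 ∧ c ∈ Set.Icc (-1 : ℝ) 1 := by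
  have hm' : (2:ℝ) ≤ (m:ℝ) := by exact_mod_cast hm
  have hn' : (2:ℝ) ≤ (n:ℝ) := by exact_mod_cast hn
  have hM : (1:ℝ) ≤ (m:ℝ) - 1 := by linarith
  have hN : (1:ℝ) ≤ (n:ℝ) - 1 := by linarith
  have hM0 : (0:ℝ) ≤ (m:ℝ) - 1 := by linarith
  have hN0 : (0:ℝ) ≤ (n:ℝ) - 1 := by linarith
  -- a ≤ 1 : h2 + (n-1)·h3
  have ha1 : a ≤ 1 := by nlinarith [mul_nonneg hN0 h3]
  -- b ≤ 1 : h1 + (m-1)·h3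
  have hb1 : b ≤ 1 := by nlinarith [mul_nonneg hM0 h3]
  -- 1 + (m-1)a ≥ 0 : h4 + (n-1)·h1
  have haM : 0 ≤ 1 + ((m:ℝ) - 1) * a := by nlinarith [mul_nonneg hN0 h1]
  -- 1 + (n-1)b ≥ 0 : h4 + (m-1)·h2
  have hbN : 0 ≤ 1 + ((n:ℝ) - 1) * b := by nlinarith [mul_nonneg hM0 h2]
  have ha2 : -1 ≤ a := by nlinarith [haM]
  have hb2 : -1 ≤ b := by nlinarith [hbN]
  -- c ≤ 1 : h1 + h2 with a ≤ 1, b ≤ 1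
  have hc1 : c ≤ 1 := by
    nlinarith [mul_nonneg hM0 (by linarith : (0:ℝ) ≤ 1 - a),
      mul_nonneg hN0 (by linarith : (0:ℝ) ≤ 1 - b)]
  -- c ≥ -1 : case split on m ≤ n vs n ≤ m
  have hc2 : -1 ≤ c := by
    rcases le_total ((m:ℝ) - 1) ((n:ℝ) - 1) with h | h
    · -- M ≤ N : M·((n-1)·h3 + h4) + (N-M)(1+Ma) = N(1+M)(1+Mc)
      have hsum : 0 ≤ ((n:ℝ)-1) * (1+((m:ℝ)-1)) * (1+((m:ℝ)-1)*c) := by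
        linarith [mul_nonneg (mul_nonneg hM0 hN0) h3, mul_nonneg hM0 h4,
          mul_nonneg (by linarith : (0:ℝ) ≤ ((n:ℝ)-1) - ((m:ℝ)-1)) haM]
      have hpos : 0 < ((n:ℝ)-1) * (1+((m:ℝ)-1)) := by
        apply mul_pos <;> linarith
      have key : 0 ≤ 1 + ((m:ℝ)-1)*c := nonneg_of_mul_nonneg_right hsum hpos
      nlinarith [key]
    · have hsum : 0 ≤ ((m:ℝ)-1) * (1+((n:ℝ)-1)) * (1+((n:ℝ)-1)*c) := by
        linarith [mul_nonneg (mul_nonneg hM0 hN0) h3, mul_nonneg hN0 h4,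
          mul_nonneg (by linarith : (0:ℝ) ≤ ((m:ℝ)-1) - ((n:ℝ)-1)) hbN]
      have hpos : 0 < ((m:ℝ)-1) * (1+((n:ℝ)-1)) := by
        apply mul_pos <;> linarith
      have key : 0 ≤ 1 + ((n:ℝ)-1)*c := nonneg_of_mul_nonneg_right hsum hpos
      nlinarith [key]
  exact ⟨⟨ha2, ha1⟩, ⟨hb2, hb1⟩, ⟨hc2, hc1⟩⟩
end

section
/- Let m, n ≥ 2. The m×n monic symmetric biquadratic form with parameters (a,b,c) = (−1/(m−1), −1/(n−1), 1/((m−1)(n−1))) satisfies the identity P(x,y) = (1/((m−1)(n−1))) ∑_{1≤i<k≤m} ∑_{1≤j<l≤n} ((x_i − x_k)(y_j − y_l))² for all x ∈ ℝ^m, y ∈ ℝ^n; in particular it is a sum of squares of bilinear forms. -/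
open Finset

lemma offdiag {m : ℕ} (f : Fin m → ℝ) :
    ∑ i, ∑ k, (if i ≠ k then f i * f k else 0)
      = (∑ i, f i) ^ 2 - ∑ i, (f i) ^ 2 := by
  have h : ∀ i k : Fin m, (if i ≠ k then f i * f k else 0)
      = f i * f k - (if i = k then f i * f k else 0) := by
    intro i k; by_cases h : i = k <;> simp [h]
  simp only [h, Finset.sum_sub_distrib]
  congr 1
  · rw [sq, Finset.sum_mul_sum]
  · simp [sq]

lemma pairsum {m : ℕ} (f : Fin m → ℝ) :
    (2:ℝ) * ∑ i, ∑ k, (if i < k then (f i - f k) ^ 2 else 0)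
      = 2 * ((m : ℝ) * ∑ i, (f i) ^ 2 - (∑ i, f i) ^ 2) := by
  have key : ∀ i k : Fin m, (f i - f k) ^ 2
      = (if i < k then (f i - f k) ^ 2 else 0) + (if k < i then (f i - f k) ^ 2 else 0) := by
    intro i k
    rcases lt_trichotomy i k with h | h | h
    · simp [h, asymm h]
    · subst h; simp
    · simp [h, asymm h, lt_asymm]
  have hsym : ∑ i, ∑ k, (if k < i then (f i - f k) ^ 2 else 0)
      = ∑ i, ∑ k, (if i < k then (f i - f k) ^ 2 else 0) := by
    rw [Finset.sum_comm]
    refine Finset.sum_congr rfl fun i _ => Finset.sum_congr rfl fun k _ => ?_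
    congr 1
    ring
  have expand : ∑ i, ∑ k : Fin m, (f i - f k) ^ 2
      = 2 * ((m : ℝ) * ∑ i, (f i) ^ 2 - (∑ i, f i) ^ 2) := by
    have h1 : ∀ i k : Fin m, (f i - f k) ^ 2
        = (f i) ^ 2 - 2 * (f i * f k) + (f k) ^ 2 := by intro i k; ring
    simp only [h1, Finset.sum_add_distrib, Finset.sum_sub_distrib, ← Finset.mul_sum,
      Finset.sum_const, Finset.card_univ, Fintype.card_fin, nsmul_eq_mul]
    push_cast
    rw [← Finset.sum_mul]
    ring
  calc (2:ℝ) * ∑ i, ∑ k, (if i < k then (f i - f k) ^ 2 else 0)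
      = (∑ i, ∑ k, (if i < k then (f i - f k) ^ 2 else 0))
        + ∑ i, ∑ k, (if k < i then (f i - f k) ^ 2 else 0) := by rw [hsym]; ring
    _ = ∑ i, ∑ k : Fin m, (f i - f k) ^ 2 := by
        rw [← Finset.sum_add_distrib]
        refine Finset.sum_congr rfl fun i _ => ?_
        rw [← Finset.sum_add_distrib]
        exact (Finset.sum_congr rfl fun k _ => (key i k).symm)
    _ = _ := expand

/-- SOS decomposition of the vertex
V₂ = (−1/(m−1), −1/(n−1), 1/((m−1)(n−1))). -/
theorem vertex_V2_identity (m n : ℕ) (hm : 2 ≤ m) (hn : 2 ≤ n)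
    (x : Fin m → ℝ) (y : Fin n → ℝ) :
    monicForm m n (-(1 / ((m : ℝ) - 1))) (-(1 / ((n : ℝ) - 1)))
        (1 / (((m : ℝ) - 1) * ((n : ℝ) - 1))) x y
      = (1 / (((m : ℝ) - 1) * ((n : ℝ) - 1))) *
          ∑ i, ∑ k, ∑ j, ∑ l,
            (if i < k ∧ j < l then ((x i - x k) * (y j - y l)) ^ 2 else 0) := by
  have hm1 : ((m : ℝ) - 1) ≠ 0 := by
    have : (2:ℝ) ≤ (m:ℝ) := by exact_mod_cast hm
    linarith
  have hn1 : ((n : ℝ) - 1) ≠ 0 := by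
    have : (2:ℝ) ≤ (n:ℝ) := by exact_mod_cast hn
    linarith
  -- factor the four-fold sums
  have t1 : ∑ i, ∑ j, (x i) ^ 2 * (y j) ^ 2
      = (∑ i, (x i) ^ 2) * (∑ j, (y j) ^ 2) := (Finset.sum_mul_sum _ _ _ _).symm
  have t2 : ∑ i, ∑ k, ∑ j, (if i ≠ k then x i * x k * (y j) ^ 2 else 0)
      = ((∑ i, x i) ^ 2 - ∑ i, (x i) ^ 2) * (∑ j, (y j) ^ 2) := by
    have h : ∀ (i k : Fin m) (j : Fin n), (if i ≠ k then x i * x k * (y j) ^ 2 else 0)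
        = (if i ≠ k then x i * x k else 0) * (y j) ^ 2 := by
      intro i k j; by_cases h : i = k <;> simp [h]
    simp only [h, ← Finset.mul_sum, ← Finset.sum_mul]
    rw [← offdiag x]
  have t3 : ∑ i, ∑ j, ∑ l, (if j ≠ l then (x i) ^ 2 * y j * y l else 0)
      = (∑ i, (x i) ^ 2) * ((∑ j, y j) ^ 2 - ∑ j, (y j) ^ 2) := by
    have h : ∀ (i : Fin m) (j l : Fin n), (if j ≠ l then (x i) ^ 2 * y j * y l else 0)
        = (x i) ^ 2 * (if j ≠ l then y j * y l else 0) := by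
      intro i j l; by_cases h : j = l <;> simp [h]; ring
    simp only [h, ← Finset.mul_sum, ← Finset.sum_mul]
    rw [← offdiag y]
  have t4 : ∑ i, ∑ k, ∑ j, ∑ l, (if i ≠ k ∧ j ≠ l then x i * y j * x k * y l else 0)
      = ((∑ i, x i) ^ 2 - ∑ i, (x i) ^ 2) * ((∑ j, y j) ^ 2 - ∑ j, (y j) ^ 2) := by
    have h : ∀ (i k : Fin m) (j l : Fin n),
        (if i ≠ k ∧ j ≠ l then x i * y j * x k * y l else 0)
        = (if i ≠ k then x i * x k else 0) * (if j ≠ l then y j * y l else 0) := by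
      intro i k j l
      by_cases h1 : i = k <;> by_cases h2 : j = l <;> simp [h1, h2] <;> ring
    simp only [h, ← Finset.mul_sum, ← Finset.sum_mul]
    rw [← offdiag x, ← offdiag y]
  have t5 : ∑ i, ∑ k, ∑ j, ∑ l,
        (if i < k ∧ j < l then ((x i - x k) * (y j - y l)) ^ 2 else 0)
      = (∑ i, ∑ k, (if i < k then (x i - x k) ^ 2 else 0))
        * (∑ j, ∑ l, (if j < l then (y j - y l) ^ 2 else 0)) := by
    have h : ∀ (i k : Fin m) (j l : Fin n),
        (if i < k ∧ j < l then ((x i - x k) * (y j - y l)) ^ 2 else 0)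
        = (if i < k then (x i - x k) ^ 2 else 0) * (if j < l then (y j - y l) ^ 2 else 0) := by
      intro i k j l
      by_cases h1 : i < k <;> by_cases h2 : j < l <;> simp [h1, h2] <;> ring
    simp only [h, ← Finset.mul_sum, ← Finset.sum_mul]
  have px := pairsum x
  have py := pairsum y
  have hx : ∑ i, ∑ k, (if i < k then (x i - x k) ^ 2 else 0)
      = (m : ℝ) * ∑ i, (x i) ^ 2 - (∑ i, x i) ^ 2 := by linarith
  have hy : ∑ j, ∑ l, (if j < l then (y j - y l) ^ 2 else 0)
      = (n : ℝ) * ∑ j, (y j) ^ 2 - (∑ j, y j) ^ 2 := by linarith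
  rw [monicForm, t1, t2, t3, t4, t5, hx, hy]
  field_simp
  ring
end

section
/- Let m, n ≥ 2. The m×n monic symmetric biquadratic form with parameters (a,b,c) = (1, −1/(n−1), −1/(n−1)) satisfies the identity P(x,y) = (1/(n−1)) ∑_{1≤j<l≤n} ((∑_{i=1}^m x_i)(y_j − y_l))² for all x ∈ ℝ^m, y ∈ ℝ^n; in particular it is a sum of squares of bilinear forms. -/
open Finset

lemma sum_ite_ne {α : Type*} [Fintype α] [DecidableEq α] (f g : α → ℝ) :
    ∑ i, ∑ k, (if i ≠ k then f i * g k else 0)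
      = (∑ i, f i) * (∑ i, g i) - ∑ i, f i * g i := by
  have h : ∀ i k : α, (if i ≠ k then f i * g k else 0)
      = f i * g k - (if i = k then f i * g k else 0) := by
    intro i k; by_cases h : i = k <;> simp [h]
  simp_rw [h, Finset.sum_sub_distrib, Finset.sum_ite_eq, Finset.mem_univ, if_true,
    ← Finset.sum_mul_sum]

lemma half_sum {n : ℕ} (T : Fin n → Fin n → ℝ) (hsym : ∀ j l, T j l = T l j)
    (hdiag : ∀ j, T j j = 0) :
    ∑ j, ∑ l, T j l = 2 * ∑ j, ∑ l, (if j < l then T j l else 0) := by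
  have h : ∀ j l, T j l
      = (if j < l then T j l else 0) + (if l < j then T j l else 0) := by
    intro j l
    rcases lt_trichotomy j l with h | h | h
    · simp [h, not_lt_of_gt h]
    · simp [h, hdiag]
    · simp [h, not_lt_of_gt h]
  calc ∑ j, ∑ l, T j l
      = ∑ j, ∑ l, ((if j < l then T j l else 0) + (if l < j then T j l else 0)) := by
        simp_rw [← h]
    _ = (∑ j, ∑ l, (if j < l then T j l else 0)) + ∑ j, ∑ l, (if l < j then T j l else 0) := by
        simp [Finset.sum_add_distrib]
    _ = 2 * ∑ j, ∑ l, (if j < l then T j l else 0) := by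
        rw [Finset.sum_comm (f := fun j l => (if l < j then T j l else 0))]
        simp_rw [fun j l => hsym l j]
        ring

/-- SOS decomposition of the vertex V₄ = (1, −1/(n−1), −1/(n−1)). -/
theorem vertex_V4_identity (m n : ℕ) (hm : 2 ≤ m) (hn : 2 ≤ n)
    (x : Fin m → ℝ) (y : Fin n → ℝ) :
    monicForm m n 1 (-(1 / ((n : ℝ) - 1))) (-(1 / ((n : ℝ) - 1))) x y
      = (1 / ((n : ℝ) - 1)) *
          ∑ j, ∑ l, (if j < l then ((∑ i, x i) * (y j - y l)) ^ 2 else 0) := by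
  have hne : ((n : ℝ) - 1) ≠ 0 := by
    have : (2 : ℝ) ≤ (n : ℝ) := by exact_mod_cast hn
    linarith
  set S := ∑ i, x i with hS
  set Q := ∑ i, (x i) ^ 2 with hQ
  set s1 := ∑ j, y j with hs1
  set s2 := ∑ j, (y j) ^ 2 with hs2
  -- term 1
  have T1 : (∑ i, ∑ j, (x i) ^ 2 * (y j) ^ 2) = Q * s2 := by
    rw [← Finset.sum_mul_sum]
  -- term 2
  have T2 : (∑ i, ∑ k, ∑ j, (if i ≠ k then x i * x k * (y j) ^ 2 else 0))
      = (S * S - Q) * s2 := by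
    have h : ∀ i k : Fin m, (∑ j, (if i ≠ k then x i * x k * (y j) ^ 2 else 0))
        = (if i ≠ k then x i * x k else 0) * s2 := by
      intro i k
      by_cases h : i = k
      · simp [h]
      · simp [h, hs2, Finset.mul_sum]
    simp only [h, ← Finset.sum_mul]
    rw [sum_ite_ne]
    congr 1
    congr 1
    exact Finset.sum_congr rfl (fun i _ => (sq (x i)).symm)
  -- term 3
  have T3 : (∑ i, ∑ j, ∑ l, (if j ≠ l then (x i) ^ 2 * y j * y l else 0))
      = Q * (s1 * s1 - s2) := by
    have h : ∀ i : Fin m, (∑ j, ∑ l, (if j ≠ l then (x i) ^ 2 * y j * y l else 0))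
        = (x i) ^ 2 * (s1 * s1 - s2) := by
      intro i
      have h2 : ∀ (j l : Fin n), (if j ≠ l then (x i) ^ 2 * y j * y l else 0)
          = (x i) ^ 2 * (if j ≠ l then y j * y l else 0) := by
        intro j l; by_cases h : j = l <;> simp [h]; ring
      simp_rw [h2, ← Finset.mul_sum, sum_ite_ne]
      congr 2
      exact Finset.sum_congr rfl (fun j _ => (sq (y j)).symm)
    simp_rw [h, ← Finset.sum_mul]
    rw [hQ]
  -- term 4
  have T4 : (∑ i, ∑ k, ∑ j, ∑ l, (if i ≠ k ∧ j ≠ l then x i * y j * x k * y l else 0))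
      = (S * S - Q) * (s1 * s1 - s2) := by
    have h : ∀ (i k : Fin m) (j l : Fin n),
        (if i ≠ k ∧ j ≠ l then x i * y j * x k * y l else 0)
          = (if i ≠ k then x i * x k else 0) * (if j ≠ l then y j * y l else 0) := by
      intro i k j l
      by_cases h1 : i = k <;> by_cases h2 : j = l <;> simp [h1, h2]; ring
    simp_rw [h, ← Finset.mul_sum, ← Finset.sum_mul, sum_ite_ne]
    congr 1
    · congr 1; exact Finset.sum_congr rfl (fun i _ => (sq (x i)).symm)
    · congr 1; exact Finset.sum_congr rfl (fun j _ => (sq (y j)).symm)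
  -- RHS
  have TR : (∑ j, ∑ l, (if j < l then (S * (y j - y l)) ^ 2 else 0))
      = S ^ 2 * ((n : ℝ) * s2 - s1 * s1) := by
    have hfull : ∑ j, ∑ l, (S * (y j - y l)) ^ 2
        = 2 * ∑ j, ∑ l, (if j < l then (S * (y j - y l)) ^ 2 else 0) := by
      apply half_sum
      · intro j l; ring
      · intro j; simp
    have hexp : ∑ j, ∑ l, (S * (y j - y l)) ^ 2
        = 2 * (S ^ 2 * ((n : ℝ) * s2 - s1 * s1)) := by
      have hrow : ∀ j : Fin n, ∑ l, (S * (y j - y l)) ^ 2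
          = (S ^ 2 * (n : ℝ)) * (y j) ^ 2 - (2 * S ^ 2 * s1) * y j + S ^ 2 * s2 := by
        intro j
        have h : ∀ l : Fin n, (S * (y j - y l)) ^ 2
            = S ^ 2 * (y j) ^ 2 - (2 * S ^ 2 * y j) * y l + S ^ 2 * (y l) ^ 2 := by
          intro l; ring
        simp only [h, Finset.sum_add_distrib, Finset.sum_sub_distrib, ← Finset.mul_sum,
          Finset.sum_const, Finset.card_univ, Fintype.card_fin, nsmul_eq_mul, ← hs1, ← hs2]
        ring
      simp only [hrow, Finset.sum_add_distrib, Finset.sum_sub_distrib, ← Finset.mul_sum,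
        Finset.sum_const, Finset.card_univ, Fintype.card_fin, nsmul_eq_mul, ← hs1, ← hs2]
      ring
    linarith [hfull, hexp]
  unfold monicForm
  rw [T1, T2, T3, T4, TR]
  field_simp
  ring
end

section
/- Let m, n ≥ 2 and let Q be an m×n biquadratic form that is symmetric, i.e., Q(x_{σ(1)},…,x_{σ(m)}, y) = Q(x, y) for every permutation σ of {1,…,m} and Q(x, y_{τ(1)},…,y_{τ(n)}) = Q(x, y) for every permutation τ of {1,…,n}. If Q(x,y) ≥ 0 for all x ∈ ℝ^m, y ∈ ℝ^n, then Q is SOS: there exist finitely many bilinear forms f_1, …, f_r, with f_p(x,y) = ∑_{i=1}^m ∑_{j=1}^n w^p_{ij} x_i y_j, such that Q(x,y) = ∑_{p=1}^r f_p(x,y)² for all x, y. -/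
open Finset

variable {m n : ℕ}

/-- The biquadratic form of a coefficient array. -/
def bqf (D : Fin m → Fin n → Fin m → Fin n → ℝ) (x : Fin m → ℝ) (y : Fin n → ℝ) : ℝ :=
  ∑ i, ∑ k, ∑ j, ∑ l, D i j k l * x i * x k * y j * y l

/-- The associated 4-linear form. -/
def tf (D : Fin m → Fin n → Fin m → Fin n → ℝ) (x x' : Fin m → ℝ) (y y' : Fin n → ℝ) : ℝ :=
  ∑ i, ∑ k, ∑ j, ∑ l, D i j k l * x i * x' k * y j * y' l

lemma bqf_eq_tf (D : Fin m → Fin n → Fin m → Fin n → ℝ) (x y) :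
    bqf D x y = tf D x x y y := rfl

def dlt {k : ℕ} (a : Fin k) : Fin k → ℝ := fun i => if i = a then 1 else 0

lemma tf_eval (D : Fin m → Fin n → Fin m → Fin n → ℝ) (a c : Fin m) (b d : Fin n) :
    tf D (dlt a) (dlt c) (dlt b) (dlt d) = D a b c d := by
  simp [tf, dlt, mul_ite, ite_mul, Finset.sum_ite_eq']

lemma tf_add1 (D : Fin m → Fin n → Fin m → Fin n → ℝ) (x1 x2 x' y y') :
    tf D (fun i => x1 i + x2 i) x' y y' = tf D x1 x' y y' + tf D x2 x' y y' := by
  simp only [tf, mul_add, add_mul, Finset.sum_add_distrib]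

lemma tf_add2 (D : Fin m → Fin n → Fin m → Fin n → ℝ) (x x1 x2 y y') :
    tf D x (fun i => x1 i + x2 i) y y' = tf D x x1 y y' + tf D x x2 y y' := by
  simp only [tf, mul_add, add_mul, Finset.sum_add_distrib]

lemma tf_add4 (D : Fin m → Fin n → Fin m → Fin n → ℝ) (x x' y y1 y2) :
    tf D x x' y (fun j => y1 j + y2 j) = tf D x x' y y1 + tf D x x' y y2 := by
  simp only [tf, mul_add, add_mul, Finset.sum_add_distrib]

lemma tf_add3 (D : Fin m → Fin n → Fin m → Fin n → ℝ) (x x' y1 y2 y') :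
    tf D x x' (fun j => y1 j + y2 j) y' = tf D x x' y1 y' + tf D x x' y2 y' := by
  simp only [tf, mul_add, add_mul, Finset.sum_add_distrib]

lemma tf_symm1 (D : Fin m → Fin n → Fin m → Fin n → ℝ)
    (hik : ∀ i j k l, D i j k l = D k j i l) (x x' y y') :
    tf D x x' y y' = tf D x' x y y' := by
  unfold tf
  rw [Finset.sum_comm]
  refine Finset.sum_congr rfl fun a _ => Finset.sum_congr rfl fun b _ =>
    Finset.sum_congr rfl fun j _ => Finset.sum_congr rfl fun l _ => ?_
  rw [hik]; ring

lemma tf_symm3 (D : Fin m → Fin n → Fin m → Fin n → ℝ)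
    (hjl : ∀ i j k l, D i j k l = D i l k j) (x x' y y') :
    tf D x x' y y' = tf D x x' y' y := by
  unfold tf
  refine Finset.sum_congr rfl fun i _ => Finset.sum_congr rfl fun k _ => ?_
  rw [Finset.sum_comm]
  refine Finset.sum_congr rfl fun a _ => Finset.sum_congr rfl fun b _ => ?_
  rw [hjl]; ring

/-- Polarization: a symmetric coefficient array with vanishing biquadratic form is zero. -/
lemma bqf_zero_of (D : Fin m → Fin n → Fin m → Fin n → ℝ)
    (hik : ∀ i j k l, D i j k l = D k j i l) (hjl : ∀ i j k l, D i j k l = D i l k j)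
    (h0 : ∀ x y, bqf D x y = 0) : ∀ i j k l, D i j k l = 0 := by
  have h1 : ∀ x x' y, tf D x x' y y = 0 := by
    intro x x' y
    have e := h0 (fun i => x i + x' i) y
    rw [bqf_eq_tf, tf_add1, tf_add2, tf_add2] at e
    have e1 : tf D x x y y = 0 := h0 x y
    have e2 : tf D x' x' y y = 0 := h0 x' y
    have e3 : tf D x' x y y = tf D x x' y y := (tf_symm1 D hik x' x y y)
    linarith
  have h2 : ∀ x x' y y', tf D x x' y y' = 0 := by
    intro x x' y y'
    have e := h1 x x' (fun j => y j + y' j)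
    rw [tf_add3, tf_add4, tf_add4] at e
    have e1 := h1 x x' y
    have e2 := h1 x x' y'
    have e3 : tf D x x' y' y = tf D x x' y y' := (tf_symm3 D hjl x x' y' y).symm ▸ rfl
    have e3 : tf D x x' y' y = tf D x x' y y' := by rw [tf_symm3 D hjl x x' y' y]
    linarith
  intro i j k l
  have := h2 (dlt i) (dlt k) (dlt j) (dlt l)
  rwa [tf_eval] at this

lemma bqf_permx (D : Fin m → Fin n → Fin m → Fin n → ℝ) (σ : Equiv.Perm (Fin m))
    (x : Fin m → ℝ) (y : Fin n → ℝ) :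
    bqf D (fun i => x (σ i)) y = bqf (fun i j k l => D (σ.symm i) j (σ.symm k) l) x y := by
  unfold bqf
  refine Fintype.sum_equiv σ _ _ fun i => ?_
  refine Fintype.sum_equiv σ _ _ fun k => ?_
  simp

lemma bqf_permy (D : Fin m → Fin n → Fin m → Fin n → ℝ) (τ : Equiv.Perm (Fin n))
    (x : Fin m → ℝ) (y : Fin n → ℝ) :
    bqf D x (fun j => y (τ j)) = bqf (fun i j k l => D i (τ.symm j) k (τ.symm l)) x y := by
  unfold bqf
  refine Finset.sum_congr rfl fun i _ => Finset.sum_congr rfl fun k _ => ?_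
  refine Fintype.sum_equiv τ _ _ fun j => ?_
  refine Fintype.sum_equiv τ _ _ fun l => ?_
  simp

lemma bqf_swap_ik (D : Fin m → Fin n → Fin m → Fin n → ℝ) (x y) :
    bqf (fun i j k l => D k j i l) x y = bqf D x y := by
  unfold bqf
  rw [Finset.sum_comm]
  refine Finset.sum_congr rfl fun a _ => Finset.sum_congr rfl fun b _ =>
    Finset.sum_congr rfl fun j _ => Finset.sum_congr rfl fun l _ => ?_
  ring

lemma bqf_swap_jl (D : Fin m → Fin n → Fin m → Fin n → ℝ) (x y) :
    bqf (fun i j k l => D i l k j) x y = bqf D x y := by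
  unfold bqf
  refine Finset.sum_congr rfl fun i _ => Finset.sum_congr rfl fun k _ => ?_
  rw [Finset.sum_comm]
  refine Finset.sum_congr rfl fun a _ => Finset.sum_congr rfl fun b _ => ?_
  ring

lemma bqf_addD (D1 D2 : Fin m → Fin n → Fin m → Fin n → ℝ) (x y) :
    bqf (fun i j k l => D1 i j k l + D2 i j k l) x y = bqf D1 x y + bqf D2 x y := by
  simp only [bqf, add_mul, Finset.sum_add_distrib]

lemma bqf_smulD (c : ℝ) (D : Fin m → Fin n → Fin m → Fin n → ℝ) (x y) :
    bqf (fun i j k l => c * D i j k l) x y = c * bqf D x y := by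
  simp only [bqf, Finset.mul_sum, mul_assoc]

/-- Symmetrization. -/
noncomputable def symD (A : Fin m → Fin n → Fin m → Fin n → ℝ) : Fin m → Fin n → Fin m → Fin n → ℝ :=
  fun i j k l => (A i j k l + A k j i l + A i l k j + A k l i j) / 4

lemma symD_ik (A : Fin m → Fin n → Fin m → Fin n → ℝ) (i j k l) :
    symD A i j k l = symD A k j i l := by unfold symD; ring

lemma symD_jl (A : Fin m → Fin n → Fin m → Fin n → ℝ) (i j k l) :
    symD A i j k l = symD A i l k j := by unfold symD; ring

lemma bqf_symD (A : Fin m → Fin n → Fin m → Fin n → ℝ) (x y) :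
    bqf (symD A) x y = bqf A x y := by
  have h1 : bqf (fun i j k l => A k j i l) x y = bqf A x y := bqf_swap_ik A x y
  have h2 : bqf (fun i j k l => A i l k j) x y = bqf A x y := bqf_swap_jl A x y
  have h3 : bqf (fun i j k l => A k l i j) x y = bqf A x y := by
    rw [bqf_swap_ik (fun i j k l => A i l k j) x y, bqf_swap_jl]
  have key : bqf (fun i j k l => A i j k l + A k j i l + A i l k j + A k l i j) x y
      = 4 * bqf A x y := by
    rw [bqf_addD, bqf_addD (fun i j k l => A i j k l + A k j i l), bqf_addD A]
    rw [h1, h2, h3]; ring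
  have : symD A = fun i j k l => (1/4 : ℝ) *
      (A i j k l + A k j i l + A i l k j + A k l i j) := by
    funext i j k l; unfold symD; ring
  rw [this, bqf_smulD, key]; ring

lemma bqf_subD (D1 D2 : Fin m → Fin n → Fin m → Fin n → ℝ) (x y) :
    bqf (fun i j k l => D1 i j k l - D2 i j k l) x y = bqf D1 x y - bqf D2 x y := by
  simp only [bqf, sub_mul, Finset.sum_sub_distrib]

/-- If the values of bqf B are invariant under x-permutations, so are the coefficients. -/
lemma coeff_invx (B : Fin m → Fin n → Fin m → Fin n → ℝ)
    (hik : ∀ i j k l, B i j k l = B k j i l) (hjl : ∀ i j k l, B i j k l = B i l k j)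
    (h : ∀ (σ : Equiv.Perm (Fin m)) x y, bqf B (fun i => x (σ i)) y = bqf B x y) :
    ∀ (σ : Equiv.Perm (Fin m)) i j k l, B (σ i) j (σ k) l = B i j k l := by
  have key : ∀ (σ : Equiv.Perm (Fin m)) i j k l, B (σ.symm i) j (σ.symm k) l = B i j k l := by
    intro σ
    refine fun i j k l => sub_eq_zero.mp ?_
    refine bqf_zero_of (fun i j k l => B (σ.symm i) j (σ.symm k) l - B i j k l)
      (fun i j k l => by rw [hik (σ.symm i) j (σ.symm k) l, hik i j k l])
      (fun i j k l => by rw [hjl (σ.symm i) j (σ.symm k) l, hjl i j k l])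
      (fun x y => ?_) i j k l
    rw [bqf_subD, ← bqf_permx, h, sub_self]
  intro σ i j k l
  simpa using key σ.symm i j k l

lemma coeff_invy (B : Fin m → Fin n → Fin m → Fin n → ℝ)
    (hik : ∀ i j k l, B i j k l = B k j i l) (hjl : ∀ i j k l, B i j k l = B i l k j)
    (h : ∀ (τ : Equiv.Perm (Fin n)) x y, bqf B x (fun j => y (τ j)) = bqf B x y) :
    ∀ (τ : Equiv.Perm (Fin n)) i j k l, B i (τ j) k (τ l) = B i j k l := by
  have key : ∀ (τ : Equiv.Perm (Fin n)) i j k l, B i (τ.symm j) k (τ.symm l) = B i j k l := by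
    intro τ
    refine fun i j k l => sub_eq_zero.mp ?_
    refine bqf_zero_of (fun i j k l => B i (τ.symm j) k (τ.symm l) - B i j k l)
      (fun i j k l => by rw [hik i (τ.symm j) k (τ.symm l), hik i j k l])
      (fun i j k l => by rw [hjl i (τ.symm j) k (τ.symm l), hjl i j k l])
      (fun x y => ?_) i j k l
    rw [bqf_subD, ← bqf_permy, h, sub_self]
  intro τ i j k l
  simpa using key τ.symm i j k l

/-- Pair transitivity of permutations. -/
lemma exists_perm_pair {N : ℕ} {i k i' k' : Fin N} (h : i ≠ k) (h' : i' ≠ k') :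
    ∃ σ : Equiv.Perm (Fin N), σ i = i' ∧ σ k = k' := by
  set σ₁ := Equiv.swap i i' with hσ₁
  have hk1 : σ₁ k ≠ i' := by
    intro hc
    exact h (σ₁.injective (by rw [hc, hσ₁, Equiv.swap_apply_left]))
  refine ⟨σ₁.trans (Equiv.swap (σ₁ k) k'), ?_, ?_⟩
  · simp only [Equiv.trans_apply, hσ₁, Equiv.swap_apply_left]
    exact Equiv.swap_apply_of_ne_of_ne hk1.symm h'
  · simp only [Equiv.trans_apply, Equiv.swap_apply_left]

lemma coeff_pattern (B : Fin m → Fin n → Fin m → Fin n → ℝ)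
    (hx : ∀ (σ : Equiv.Perm (Fin m)) i j k l, B (σ i) j (σ k) l = B i j k l)
    (hy : ∀ (τ : Equiv.Perm (Fin n)) i j k l, B i (τ j) k (τ l) = B i j k l) :
    ∀ i j k l i' j' k' l', (i = k ↔ i' = k') → (j = l ↔ j' = l') → B i j k l = B i' j' k' l' := by
  have stepx : ∀ (i k i' k' : Fin m), (i = k ↔ i' = k') → ∀ j l, B i j k l = B i' j k' l := by
    intro i k i' k' hiff j l
    by_cases hcase : i = k
    · have h2 : i' = k' := hiff.mp hcase
      subst hcase; subst h2
      have := hx (Equiv.swap i i') i j i l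
      rw [Equiv.swap_apply_left] at this
      exact this.symm
    · have h2 : i' ≠ k' := fun hc => hcase (hiff.mpr hc)
      obtain ⟨σ, h1, h3⟩ := exists_perm_pair hcase h2
      have := hx σ i j k l
      rw [h1, h3] at this
      exact this.symm
  have stepy : ∀ (j l j' l' : Fin n), (j = l ↔ j' = l') → ∀ i k, B i j k l = B i j' k l' := by
    intro j l j' l' hiff i k
    by_cases hcase : j = l
    · have h2 : j' = l' := hiff.mp hcase
      subst hcase; subst h2
      have := hy (Equiv.swap j j') i j k j
      rw [Equiv.swap_apply_left] at this
      exact this.symm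
    · have h2 : j' ≠ l' := fun hc => hcase (hiff.mpr hc)
      obtain ⟨τ, h1, h3⟩ := exists_perm_pair hcase h2
      have := hy τ i j k l
      rw [h1, h3] at this
      exact this.symm
  intro i j k l i' j' k' l' h1 h2
  exact (stepx i k i' k' h1 j l).trans (stepy j l j' l' h2 i' k')

lemma bqf_one (x : Fin m → ℝ) (y : Fin n → ℝ) :
    bqf (fun _ _ _ _ => (1:ℝ)) x y = (∑ i, x i)^2 * (∑ j, y j)^2 := by
  simp only [bqf, one_mul]
  simp only [pow_two, mul_assoc]
  simp only [← Finset.mul_sum]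
  simp only [← mul_assoc]
  simp only [← Finset.sum_mul]
  ring

lemma bqf_Iik (x : Fin m → ℝ) (y : Fin n → ℝ) :
    bqf (fun i _ k _ => if i = k then (1:ℝ) else 0) x y = (∑ i, x i ^ 2) * (∑ j, y j)^2 := by
  simp only [bqf, ite_mul, zero_mul, one_mul, Finset.sum_ite_irrel, Finset.sum_const_zero,
    Finset.sum_ite_eq, Finset.mem_univ, if_true]
  simp only [pow_two, mul_assoc]
  simp only [← Finset.mul_sum]
  simp only [← mul_assoc]
  simp only [← Finset.sum_mul]
  ring

lemma bqf_Ijl (x : Fin m → ℝ) (y : Fin n → ℝ) :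
    bqf (fun _ j _ l => if j = l then (1:ℝ) else 0) x y = (∑ i, x i)^2 * (∑ j, y j ^ 2) := by
  simp only [bqf, ite_mul, zero_mul, one_mul, Finset.sum_ite_irrel, Finset.sum_const_zero,
    Finset.sum_ite_eq, Finset.mem_univ, if_true]
  simp only [pow_two, mul_assoc]
  simp only [← Finset.mul_sum]
  simp only [← mul_assoc]
  simp only [← Finset.sum_mul]
  ring

lemma bqf_Iboth (x : Fin m → ℝ) (y : Fin n → ℝ) :
    bqf (fun i j k l => if i = k then (if j = l then (1:ℝ) else 0) else 0) x y
      = (∑ i, x i ^ 2) * (∑ j, y j ^ 2) := by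
  simp only [bqf, ite_mul, zero_mul, one_mul, Finset.sum_ite_irrel, Finset.sum_const_zero,
    Finset.sum_ite_eq, Finset.mem_univ, if_true]
  simp only [pow_two, mul_assoc]
  simp only [← Finset.mul_sum]
  simp only [← mul_assoc]
  simp only [← Finset.sum_mul]

lemma bqf_pattern (p q r s : ℝ) (x : Fin m → ℝ) (y : Fin n → ℝ) :
    bqf (fun i j k l => if i = k then (if j = l then p else q) else (if j = l then r else s)) x y
      = s * ((∑ i, x i)^2 * (∑ j, y j)^2) + (r - s) * ((∑ i, x i)^2 * (∑ j, y j ^ 2))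
        + (q - s) * ((∑ i, x i ^ 2) * (∑ j, y j)^2)
        + (p - q - r + s) * ((∑ i, x i ^ 2) * (∑ j, y j ^ 2)) := by
  have hfun : (fun i j k l => if i = k then (if j = l then p else q) else (if j = l then r else s))
      = fun (i : Fin m) (j : Fin n) (k : Fin m) (l : Fin n) =>
        s * (fun _ _ _ _ => (1:ℝ)) i j k l
          + ((r - s) * (fun _ j _ l => if j = l then (1:ℝ) else 0) i j k l
            + ((q - s) * (fun i _ k _ => if i = k then (1:ℝ) else 0) i j k l
              + (p - q - r + s) *
                (fun i j k l => if i = k then (if j = l then (1:ℝ) else 0) else 0) i j k l)) := by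
    funext i j k l
    by_cases h1 : i = k <;> by_cases h2 : j = l <;> simp [h1, h2] <;> ring
  rw [hfun, bqf_addD, bqf_addD, bqf_addD, bqf_smulD, bqf_smulD, bqf_smulD, bqf_smulD,
    bqf_one, bqf_Ijl, bqf_Iik, bqf_Iboth]
  ring

/-- Representation theorem for symmetric biquadratic forms. -/
theorem repr_biquad (m n : ℕ) (hm : 2 ≤ m) (hn : 2 ≤ n)
    (A : Fin m → Fin n → Fin m → Fin n → ℝ)
    (Q : (Fin m → ℝ) → (Fin n → ℝ) → ℝ)
    (hQ : ∀ x y, Q x y = ∑ i, ∑ k, ∑ j, ∑ l, A i j k l * x i * x k * y j * y l)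
    (hsymx : ∀ (σ : Equiv.Perm (Fin m)) (x : Fin m → ℝ) (y : Fin n → ℝ),
        Q (fun i => x (σ i)) y = Q x y)
    (hsymy : ∀ (τ : Equiv.Perm (Fin n)) (x : Fin m → ℝ) (y : Fin n → ℝ),
        Q x (fun j => y (τ j)) = Q x y) :
    ∃ a b c d : ℝ, ∀ x y, Q x y
      = a * ((∑ i, x i)^2 * (∑ j, y j)^2) + b * ((∑ i, x i)^2 * (∑ j, y j ^ 2))
        + c * ((∑ i, x i ^ 2) * (∑ j, y j)^2) + d * ((∑ i, x i ^ 2) * (∑ j, y j ^ 2)) := by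
  set B := symD A with hB
  have hQB : ∀ x y, Q x y = bqf B x y := fun x y => (hQ x y).trans (bqf_symD A x y).symm
  have hinvx : ∀ (σ : Equiv.Perm (Fin m)) i j k l, B (σ i) j (σ k) l = B i j k l :=
    coeff_invx B (symD_ik A) (symD_jl A)
      (fun σ x y => by rw [← hQB, ← hQB, hsymx])
  have hinvy : ∀ (τ : Equiv.Perm (Fin n)) i j k l, B i (τ j) k (τ l) = B i j k l :=
    coeff_invy B (symD_ik A) (symD_jl A)
      (fun τ x y => by rw [← hQB, ← hQB, hsymy])
  have hpatt := coeff_pattern B hinvx hinvy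
  set i0 : Fin m := ⟨0, by omega⟩ with hi0
  set i1 : Fin m := ⟨1, by omega⟩ with hi1
  set j0 : Fin n := ⟨0, by omega⟩ with hj0
  set j1 : Fin n := ⟨1, by omega⟩ with hj1
  have hi01 : i0 ≠ i1 := by simp [hi0, hi1, Fin.ext_iff]
  have hj01 : j0 ≠ j1 := by simp [hj0, hj1, Fin.ext_iff]
  set p := B i0 j0 i0 j0
  set q := B i0 j0 i0 j1
  set r := B i0 j0 i1 j0
  set s := B i0 j0 i1 j1
  have hpat : ∀ i j k l, B i j k l
      = if i = k then (if j = l then p else q) else (if j = l then r else s) := by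
    intro i j k l
    by_cases h1 : i = k <;> by_cases h2 : j = l
    · rw [if_pos h1, if_pos h2]
      exact hpatt i j k l i0 j0 i0 j0 (iff_of_true h1 rfl) (iff_of_true h2 rfl)
    · rw [if_pos h1, if_neg h2]
      exact hpatt i j k l i0 j0 i0 j1 (iff_of_true h1 rfl) (iff_of_false h2 hj01)
    · rw [if_neg h1, if_pos h2]
      exact hpatt i j k l i0 j0 i1 j0 (iff_of_false h1 hi01) (iff_of_true h2 rfl)
    · rw [if_neg h1, if_neg h2]
      exact hpatt i j k l i0 j0 i1 j1 (iff_of_false h1 hi01) (iff_of_false h2 hj01)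
  refine ⟨s, r - s, q - s, p - q - r + s, fun x y => ?_⟩
  rw [hQB x y, show B = fun i j k l =>
    if i = k then (if j = l then p else q) else (if j = l then r else s) from
    funext fun i => funext fun j => funext fun k => funext fun l => hpat i j k l]
  exact bqf_pattern p q r s x y

/-- Sum-of-squares-of-bilinear-forms predicate. -/
def IsSOS (m n : ℕ) (Q : (Fin m → ℝ) → (Fin n → ℝ) → ℝ) : Prop :=
  ∃ (r : ℕ) (w : Fin r → Fin m → Fin n → ℝ), ∀ x y,
    Q x y = ∑ p, (∑ i, ∑ j, w p i j * x i * y j) ^ 2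

lemma sos_congr {Q1 Q2 : (Fin m → ℝ) → (Fin n → ℝ) → ℝ}
    (h : ∀ x y, Q1 x y = Q2 x y) (h1 : IsSOS m n Q1) : IsSOS m n Q2 := by
  obtain ⟨r, w, hw⟩ := h1
  exact ⟨r, w, fun x y => (h x y) ▸ hw x y⟩

lemma sos_zero : IsSOS m n (fun _ _ => 0) :=
  ⟨0, fun _ _ _ => 0, by simp⟩

lemma sos_add {Q1 Q2 : (Fin m → ℝ) → (Fin n → ℝ) → ℝ}
    (h1 : IsSOS m n Q1) (h2 : IsSOS m n Q2) : IsSOS m n (fun x y => Q1 x y + Q2 x y) := by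
  obtain ⟨r1, w1, hw1⟩ := h1
  obtain ⟨r2, w2, hw2⟩ := h2
  refine ⟨r1 + r2, Fin.addCases w1 w2, fun x y => ?_⟩
  rw [Fin.sum_univ_add]
  simp only [Fin.addCases_left, Fin.addCases_right]
  rw [hw1 x y, hw2 x y]

lemma sos_sum {T : Type*} [Fintype T] (F : T → (Fin m → ℝ) → (Fin n → ℝ) → ℝ)
    (h : ∀ t, IsSOS m n (F t)) : IsSOS m n (fun x y => ∑ t, F t x y) := by
  classical
  have key : ∀ s : Finset T, IsSOS m n (fun x y => ∑ t ∈ s, F t x y) := by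
    intro s
    induction s using Finset.induction with
    | empty => simpa using (sos_zero : IsSOS m n _)
    | @insert a s hnot ih =>
      have := sos_add (h a) ih
      refine sos_congr (fun x y => ?_) this
      rw [Finset.sum_insert hnot]
  exact key Finset.univ

lemma sos_rank1 (u : Fin m → ℝ) (v : Fin n → ℝ) :
    IsSOS m n (fun x y => ((∑ i, u i * x i) * (∑ j, v j * y j)) ^ 2) := by
  refine ⟨1, fun _ i j => u i * v j, fun x y => ?_⟩
  rw [Fin.sum_univ_one]
  dsimp only
  congr 1
  rw [Finset.sum_mul_sum]
  exact Finset.sum_congr rfl fun i _ => Finset.sum_congr rfl fun j _ => by ring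

lemma sum_pairs_sq {N : ℕ} (z : Fin N → ℝ) :
    ∑ t : Fin N × Fin N, (z t.1 - z t.2)^2
      = 2*N*(∑ j, z j^2) - 2*(∑ j, z j)^2 := by
  rw [Fintype.sum_prod_type]
  have key : ∀ j0 : Fin N, ∑ l0, (z j0 - z l0)^2
      = N * z j0^2 - 2*z j0*(∑ l, z l) + (∑ l, z l^2) := by
    intro j0
    have h : ∀ l0 : Fin N, (z j0 - z l0)^2 = z j0^2 - (2*z j0)*z l0 + z l0^2 :=
      fun l0 => by ring
    rw [Finset.sum_congr rfl fun l0 _ => h l0]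
    rw [Finset.sum_add_distrib, Finset.sum_sub_distrib, Finset.sum_const, ← Finset.mul_sum]
    simp only [Finset.card_univ, Fintype.card_fin, nsmul_eq_mul]
  rw [Finset.sum_congr rfl fun j0 _ => key j0]
  rw [Finset.sum_add_distrib, Finset.sum_sub_distrib, Finset.sum_const, ← Finset.mul_sum]
  simp only [Finset.card_univ, Fintype.card_fin, nsmul_eq_mul]
  have h2 : ∑ x : Fin N, 2 * z x * (∑ l, z l) = 2 * (∑ l, z l)^2 := by
    rw [← Finset.sum_mul, ← Finset.mul_sum]; ring
  rw [h2]; ring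

lemma sos_gen1 (c : ℝ) (hc : 0 ≤ c) :
    IsSOS m n (fun x y => c * ((∑ i, x i)^2 * (∑ j, y j)^2)) := by
  refine sos_congr (fun x y => ?_) (sos_rank1 (fun _ => Real.sqrt c) (fun _ => 1))
  rw [← Finset.mul_sum]
  simp only [one_mul]
  rw [mul_pow, mul_pow, Real.sq_sqrt hc]
  ring

lemma sos_gen2 (c : ℝ) (hc : 0 ≤ c) (j0 l0 : Fin n) :
    IsSOS m n (fun x y => c * ((∑ i, x i)^2 * (y j0 - y l0)^2)) := by
  refine sos_congr (fun x y => ?_) (sos_rank1 (fun _ => Real.sqrt c)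
    (fun j => (if j = j0 then 1 else 0) - (if j = l0 then 1 else 0)))
  rw [← Finset.mul_sum]
  have hv : ∑ j, ((if j = j0 then (1:ℝ) else 0) - (if j = l0 then 1 else 0)) * y j
      = y j0 - y l0 := by
    simp [sub_mul, ite_mul, Finset.sum_sub_distrib, Finset.sum_ite_eq', one_mul, zero_mul]
  rw [hv, mul_pow, mul_pow, Real.sq_sqrt hc]
  ring

lemma sos_gen3 (c : ℝ) (hc : 0 ≤ c) (i0 k0 : Fin m) :
    IsSOS m n (fun x y => c * ((x i0 - x k0)^2 * (∑ j, y j)^2)) := by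
  refine sos_congr (fun x y => ?_) (sos_rank1
    (fun i => Real.sqrt c * ((if i = i0 then 1 else 0) - (if i = k0 then 1 else 0)))
    (fun _ => 1))
  simp only [one_mul]
  have hu : ∑ i, (Real.sqrt c * ((if i = i0 then (1:ℝ) else 0) - (if i = k0 then 1 else 0))) * x i
      = Real.sqrt c * (x i0 - x k0) := by
    simp only [mul_assoc, ← Finset.mul_sum]
    congr 1
    simp [sub_mul, ite_mul, Finset.sum_sub_distrib, Finset.sum_ite_eq', one_mul, zero_mul]
  rw [hu, mul_pow, mul_pow, Real.sq_sqrt hc]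
  ring

lemma sos_gen4 (c : ℝ) (hc : 0 ≤ c) (i0 k0 : Fin m) (j0 l0 : Fin n) :
    IsSOS m n (fun x y => c * ((x i0 - x k0)^2 * (y j0 - y l0)^2)) := by
  refine sos_congr (fun x y => ?_) (sos_rank1
    (fun i => Real.sqrt c * ((if i = i0 then 1 else 0) - (if i = k0 then 1 else 0)))
    (fun j => (if j = j0 then 1 else 0) - (if j = l0 then 1 else 0)))
  have hu : ∑ i, (Real.sqrt c * ((if i = i0 then (1:ℝ) else 0) - (if i = k0 then 1 else 0))) * x i
      = Real.sqrt c * (x i0 - x k0) := by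
    simp only [mul_assoc, ← Finset.mul_sum]
    congr 1
    simp [sub_mul, ite_mul, Finset.sum_sub_distrib, Finset.sum_ite_eq', one_mul, zero_mul]
  have hv : ∑ j, ((if j = j0 then (1:ℝ) else 0) - (if j = l0 then 1 else 0)) * y j
      = y j0 - y l0 := by
    simp [sub_mul, ite_mul, Finset.sum_sub_distrib, Finset.sum_ite_eq', one_mul, zero_mul]
  rw [hu, hv, mul_pow, mul_pow, Real.sq_sqrt hc]
  ring

set_option maxHeartbeats 2000000 in
/-- every PSD symmetric biquadratic form is SOS. -/
theorem symmetric_psd_biquadratic_is_sos (m n : ℕ) (hm : 2 ≤ m) (hn : 2 ≤ n)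
    (A : Fin m → Fin n → Fin m → Fin n → ℝ)
    (Q : (Fin m → ℝ) → (Fin n → ℝ) → ℝ)
    (hQ : ∀ x y, Q x y = ∑ i, ∑ k, ∑ j, ∑ l, A i j k l * x i * x k * y j * y l)
    (hsymx : ∀ (σ : Equiv.Perm (Fin m)) (x : Fin m → ℝ) (y : Fin n → ℝ),
        Q (fun i => x (σ i)) y = Q x y)
    (hsymy : ∀ (τ : Equiv.Perm (Fin n)) (x : Fin m → ℝ) (y : Fin n → ℝ),
        Q x (fun j => y (τ j)) = Q x y)
    (hpsd : ∀ x y, 0 ≤ Q x y) :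
    ∃ (r : ℕ) (w : Fin r → Fin m → Fin n → ℝ), ∀ (x : Fin m → ℝ) (y : Fin n → ℝ),
      Q x y = ∑ p, (∑ i, ∑ j, w p i j * x i * y j) ^ 2 := by
  obtain ⟨a, b, c, d, hrep⟩ := repr_biquad m n hm hn A Q hQ hsymx hsymy
  have hM : (0:ℝ) < (m:ℝ) := by
    have : (2:ℝ) ≤ (m:ℝ) := by exact_mod_cast hm
    linarith
  have hN : (0:ℝ) < (n:ℝ) := by
    have : (2:ℝ) ≤ (n:ℝ) := by exact_mod_cast hn
    linarith
  set i0 : Fin m := ⟨0, by omega⟩ with hi0def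
  set i1 : Fin m := ⟨1, by omega⟩ with hi1def
  set j0 : Fin n := ⟨0, by omega⟩ with hj0def
  set j1 : Fin n := ⟨1, by omega⟩ with hj1def
  have hi01 : i0 ≠ i1 := by simp [hi0def, hi1def, Fin.ext_iff]
  have hj01 : j0 ≠ j1 := by simp [hj0def, hj1def, Fin.ext_iff]
  set xd : Fin m → ℝ := fun i => (if i = i0 then 1 else 0) - (if i = i1 then 1 else 0) with hxd
  set yd : Fin n → ℝ := fun j => (if j = j0 then 1 else 0) - (if j = j1 then 1 else 0) with hyd
  have hSxd : ∑ i, xd i = 0 := by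
    simp [hxd, sub_eq_add_neg, Finset.sum_add_distrib, Finset.sum_ite_eq']
  have hSyd : ∑ j, yd j = 0 := by
    simp [hyd, sub_eq_add_neg, Finset.sum_add_distrib, Finset.sum_ite_eq']
  have hTxd : ∑ i, xd i ^ 2 = 2 := by
    have h : ∀ i, xd i ^ 2 = (if i = i0 then (1:ℝ) else 0) + (if i = i1 then 1 else 0) := by
      intro i
      by_cases h0 : i = i0
      · subst h0; simp [hxd, hi01]
      · by_cases h1 : i = i1
        · subst h1; simp [hxd, Ne.symm hi01, h0]
        · simp [hxd, h0, h1]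
    rw [Finset.sum_congr rfl fun i _ => h i]
    simp [Finset.sum_add_distrib, Finset.sum_ite_eq']
    norm_num
  have hTyd : ∑ j, yd j ^ 2 = 2 := by
    have h : ∀ j, yd j ^ 2 = (if j = j0 then (1:ℝ) else 0) + (if j = j1 then 1 else 0) := by
      intro j
      by_cases h0 : j = j0
      · subst h0; simp [hyd, hj01]
      · by_cases h1 : j = j1
        · subst h1; simp [hyd, Ne.symm hj01, h0]
        · simp [hyd, h0, h1]
    rw [Finset.sum_congr rfl fun j _ => h j]
    simp [Finset.sum_add_distrib, Finset.sum_ite_eq']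
    norm_num
  -- corner inequalities
  have e00 := hpsd xd yd
  rw [hrep, hSxd, hSyd, hTxd, hTyd] at e00
  have hd : 0 ≤ d := by nlinarith [e00]
  have e10 := hpsd (fun _ => 1) yd
  rw [hrep] at e10
  simp only [hSyd, hTyd, Finset.sum_const, Finset.card_univ, Fintype.card_fin,
    nsmul_eq_mul, mul_one, one_pow] at e10
  have hb : 0 ≤ b * (m:ℝ) + d := by nlinarith [e10, hM]
  have e01 := hpsd xd (fun _ => 1)
  rw [hrep] at e01
  simp only [hSxd, hTxd, Finset.sum_const, Finset.card_univ, Fintype.card_fin,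
    nsmul_eq_mul, mul_one, one_pow] at e01
  have hc : 0 ≤ c * (n:ℝ) + d := by nlinarith [e01, hN]
  have e11 := hpsd (fun _ => 1) (fun _ => 1)
  rw [hrep] at e11
  simp only [Finset.sum_const, Finset.card_univ, Fintype.card_fin,
    nsmul_eq_mul, mul_one, one_pow] at e11
  have he : 0 ≤ a * (m:ℝ) * (n:ℝ) + b * (m:ℝ) + c * (n:ℝ) + d := by
    nlinarith [e11, hM, hN, mul_pos hM hN]
  -- the four nonnegative coefficients
  set c1v : ℝ := (a * (m:ℝ) * (n:ℝ) + b * (m:ℝ) + c * (n:ℝ) + d) / ((m:ℝ) * (n:ℝ)) with hc1v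
  set c2v : ℝ := (b * (m:ℝ) + d) / (2 * (m:ℝ) * (n:ℝ)) with hc2v
  set c3v : ℝ := (c * (n:ℝ) + d) / (2 * (m:ℝ) * (n:ℝ)) with hc3v
  set c4v : ℝ := d / (4 * (m:ℝ) * (n:ℝ)) with hc4v
  have hc1 : 0 ≤ c1v := by rw [hc1v]; exact div_nonneg he (by positivity)
  have hc2 : 0 ≤ c2v := by rw [hc2v]; exact div_nonneg hb (by positivity)
  have hc3 : 0 ≤ c3v := by rw [hc3v]; exact div_nonneg hc (by positivity)
  have hc4 : 0 ≤ c4v := by rw [hc4v]; exact div_nonneg hd (by positivity)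
  have P1 := sos_gen1 (m := m) (n := n) c1v hc1
  have P2 := sos_sum (fun t : Fin n × Fin n =>
      fun (x : Fin m → ℝ) (y : Fin n → ℝ) => c2v * ((∑ i, x i)^2 * (y t.1 - y t.2)^2))
    (fun t => sos_gen2 c2v hc2 t.1 t.2)
  have P3 := sos_sum (fun t : Fin m × Fin m =>
      fun (x : Fin m → ℝ) (y : Fin n → ℝ) => c3v * ((x t.1 - x t.2)^2 * (∑ j, y j)^2))
    (fun t => sos_gen3 c3v hc3 t.1 t.2)
  have P4 := sos_sum (fun t : (Fin m × Fin m) × (Fin n × Fin n) =>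
      fun (x : Fin m → ℝ) (y : Fin n → ℝ) => c4v * ((x t.1.1 - x t.1.2)^2 * (y t.2.1 - y t.2.2)^2))
    (fun t => sos_gen4 c4v hc4 t.1.1 t.1.2 t.2.1 t.2.2)
  have Tot := sos_add P1 (sos_add P2 (sos_add P3 P4))
  suffices hS : IsSOS m n Q by
    obtain ⟨r, w, hw⟩ := hS
    exact ⟨r, w, hw⟩
  refine sos_congr (fun x y => ?_) Tot
  have E2 : ∑ t : Fin n × Fin n, c2v * ((∑ i, x i)^2 * (y t.1 - y t.2)^2)
      = c2v * ((∑ i, x i)^2 * (2*(n:ℝ)*(∑ j, y j^2) - 2*(∑ j, y j)^2)) := by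
    simp only [← Finset.mul_sum]
    rw [sum_pairs_sq]
  have E3 : ∑ t : Fin m × Fin m, c3v * ((x t.1 - x t.2)^2 * (∑ j, y j)^2)
      = c3v * ((2*(m:ℝ)*(∑ i, x i^2) - 2*(∑ i, x i)^2) * (∑ j, y j)^2) := by
    simp only [← Finset.mul_sum, ← Finset.sum_mul]
    rw [sum_pairs_sq]
  have E4 : ∑ t : (Fin m × Fin m) × (Fin n × Fin n),
        c4v * ((x t.1.1 - x t.1.2)^2 * (y t.2.1 - y t.2.2)^2)
      = c4v * ((2*(m:ℝ)*(∑ i, x i^2) - 2*(∑ i, x i)^2)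
          * (2*(n:ℝ)*(∑ j, y j^2) - 2*(∑ j, y j)^2)) := by
    rw [Fintype.sum_prod_type]
    simp only [← Finset.mul_sum, ← Finset.sum_mul]
    rw [sum_pairs_sq, sum_pairs_sq]
  rw [E2, E3, E4, hrep x y, hc1v, hc2v, hc3v, hc4v]
  have hM' : (m:ℝ) ≠ 0 := ne_of_gt hM
  have hN' : (n:ℝ) ≠ 0 := ne_of_gt hN
  field_simp
  ring
end

section
/- Let Q be a 3×3 biquadratic form that is symmetric, i.e., invariant under every permutation of the variables x₁, x₂, x₃ and under every permutation of the variables y₁, y₂, y₃. If Q(x,y) ≥ 0 for all x, y ∈ ℝ³, then Q is SOS: there exist finitely many bilinear forms f_1, …, f_r, with f_p(x,y) = ∑_{i,j=1}^3 w^p_{ij} x_i y_j, such that Q(x,y) = ∑_{p=1}^r f_p(x,y)² for all x, y. -/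
set_option maxRecDepth 100000
set_option maxHeartbeats 2000000

namespace SOSaux13
noncomputable section

def pP (x : Fin 3 → ℝ) : ℝ := x 0 ^ 2 + x 1 ^ 2 + x 2 ^ 2
def sS (x : Fin 3 → ℝ) : ℝ := (x 0 + x 1 + x 2) ^ 2

def t01 : Equiv.Perm (Fin 3) := ⟨![1,0,2], ![1,0,2], by decide, by decide⟩
def t02 : Equiv.Perm (Fin 3) := ⟨![2,1,0], ![2,1,0], by decide, by decide⟩
def t12 : Equiv.Perm (Fin 3) := ⟨![0,2,1], ![0,2,1], by decide, by decide⟩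
def cyc : Equiv.Perm (Fin 3) := ⟨![1,2,0], ![2,0,1], by decide, by decide⟩
def cyc' : Equiv.Perm (Fin 3) := ⟨![2,0,1], ![1,2,0], by decide, by decide⟩

lemma quad_symm (C : Fin 3 → Fin 3 → ℝ) (q : (Fin 3 → ℝ) → ℝ)
    (hq : ∀ y, q y = ∑ j, ∑ l, C j l * y j * y l)
    (hsym : ∀ (τ : Equiv.Perm (Fin 3)) (y : Fin 3 → ℝ), q (fun j => y (τ j)) = q y) :
    ∀ y, q y =
      ((3 * (C 0 0 + C 1 1 + C 2 2)
          - (C 0 0 + C 0 1 + C 0 2 + C 1 0 + C 1 1 + C 1 2 + C 2 0 + C 2 1 + C 2 2)) / 6) * pP y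
      + (((C 0 0 + C 0 1 + C 0 2 + C 1 0 + C 1 1 + C 1 2 + C 2 0 + C 2 1 + C 2 2)
          - (C 0 0 + C 1 1 + C 2 2)) / 6) * sS y := by
  intro y
  have h1 := hsym t01 y
  have h2 := hsym t02 y
  have h3 := hsym t12 y
  have h4 := hsym cyc y
  have h5 := hsym cyc' y
  simp only [hq, Fin.sum_univ_three, t01, t02, t12, cyc, cyc', Equiv.coe_fn_mk,
    Matrix.cons_val_zero, Matrix.cons_val_one, Matrix.head_cons, Matrix.cons_val_two,
    Matrix.tail_cons] at h1 h2 h3 h4 h5 ⊢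
  unfold pP sS
  linear_combination (-(h1 + h2 + h3 + h4 + h5)) / 6

/-- Structural lemma: a symmetric biquadratic form lives in the 4-dim invariant space. -/
lemma structure_lemma
    (A : Fin 3 → Fin 3 → Fin 3 → Fin 3 → ℝ)
    (Q : (Fin 3 → ℝ) → (Fin 3 → ℝ) → ℝ)
    (hQ : ∀ x y, Q x y = ∑ i, ∑ k, ∑ j, ∑ l, A i j k l * x i * x k * y j * y l)
    (hsymx : ∀ (σ : Equiv.Perm (Fin 3)) (x y : Fin 3 → ℝ),
        Q (fun i => x (σ i)) y = Q x y)
    (hsymy : ∀ (τ : Equiv.Perm (Fin 3)) (x y : Fin 3 → ℝ),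
        Q x (fun j => y (τ j)) = Q x y) :
    ∃ a b c d : ℝ, ∀ x y, Q x y =
      (a * pP y + b * sS y) * pP x + (c * pP y + d * sS y) * sS x := by
  -- coefficient matrix of Q as a quadratic form in x, for fixed y
  set D : (Fin 3 → ℝ) → Fin 3 → Fin 3 → ℝ :=
    fun y i k => ∑ j, ∑ l, A i j k l * y j * y l with hD
  have hQ' : ∀ y x, Q x y = ∑ i, ∑ k, D y i k * x i * x k := by
    intro y x
    rw [hQ]
    simp only [hD, Fin.sum_univ_three]
    ring
  -- Step 1: symmetrize in x
  have hx : ∀ y x, Q x y =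
      ((3 * (D y 0 0 + D y 1 1 + D y 2 2)
          - (D y 0 0 + D y 0 1 + D y 0 2 + D y 1 0 + D y 1 1 + D y 1 2
            + D y 2 0 + D y 2 1 + D y 2 2)) / 6) * pP x
      + (((D y 0 0 + D y 0 1 + D y 0 2 + D y 1 0 + D y 1 1 + D y 1 2
            + D y 2 0 + D y 2 1 + D y 2 2)
          - (D y 0 0 + D y 1 1 + D y 2 2)) / 6) * sS x := by
    intro y
    exact quad_symm (D y) (fun x => Q x y) (hQ' y) (fun σ x => hsymx σ x y)
  -- e, f as quadratics in y with explicit coefficient matrices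
  set E : Fin 3 → Fin 3 → ℝ := fun j l =>
    (3 * (A 0 j 0 l + A 1 j 1 l + A 2 j 2 l)
      - (A 0 j 0 l + A 0 j 1 l + A 0 j 2 l + A 1 j 0 l + A 1 j 1 l + A 1 j 2 l
        + A 2 j 0 l + A 2 j 1 l + A 2 j 2 l)) / 6 with hE
  set F : Fin 3 → Fin 3 → ℝ := fun j l =>
    ((A 0 j 0 l + A 0 j 1 l + A 0 j 2 l + A 1 j 0 l + A 1 j 1 l + A 1 j 2 l
        + A 2 j 0 l + A 2 j 1 l + A 2 j 2 l)
      - (A 0 j 0 l + A 1 j 1 l + A 2 j 2 l)) / 6 with hF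
  set e : (Fin 3 → ℝ) → ℝ := fun y => ∑ j, ∑ l, E j l * y j * y l with he
  set f : (Fin 3 → ℝ) → ℝ := fun y => ∑ j, ∑ l, F j l * y j * y l with hf
  have hx2 : ∀ x y, Q x y = e y * pP x + f y * sS x := by
    intro x y
    rw [hx y x]
    simp only [he, hf, hE, hF, hD, Fin.sum_univ_three]
    ring
  -- invariance of e and f in y
  have hef : ∀ (τ : Equiv.Perm (Fin 3)) (y : Fin 3 → ℝ),
      e (fun j => y (τ j)) = e y ∧ f (fun j => y (τ j)) = f y := by
    intro τ y
    have key : ∀ x, e (fun j => y (τ j)) * pP x + f (fun j => y (τ j)) * sS x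
        = e y * pP x + f y * sS x := by
      intro x
      rw [← hx2 x (fun j => y (τ j)), ← hx2 x y, hsymy τ x y]
    have k1 := key ![1, -1, 0]
    have k2 := key ![1, 1, 1]
    simp only [pP, sS, Matrix.cons_val_zero, Matrix.cons_val_one, Matrix.head_cons,
      Matrix.cons_val_two, Matrix.tail_cons] at k1 k2
    norm_num at k1 k2
    constructor
    · linarith
    · linarith
  have heq := quad_symm E e (fun y => rfl) (fun τ y => (hef τ y).1)
  have hfq := quad_symm F f (fun y => rfl) (fun τ y => (hef τ y).2)
  refine ⟨(3 * (E 0 0 + E 1 1 + E 2 2)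
      - (E 0 0 + E 0 1 + E 0 2 + E 1 0 + E 1 1 + E 1 2 + E 2 0 + E 2 1 + E 2 2)) / 6,
    ((E 0 0 + E 0 1 + E 0 2 + E 1 0 + E 1 1 + E 1 2 + E 2 0 + E 2 1 + E 2 2)
      - (E 0 0 + E 1 1 + E 2 2)) / 6,
    (3 * (F 0 0 + F 1 1 + F 2 2)
      - (F 0 0 + F 0 1 + F 0 2 + F 1 0 + F 1 1 + F 1 2 + F 2 0 + F 2 1 + F 2 2)) / 6,
    ((F 0 0 + F 0 1 + F 0 2 + F 1 0 + F 1 1 + F 1 2 + F 2 0 + F 2 1 + F 2 2)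
      - (F 0 0 + F 1 1 + F 2 2)) / 6, fun x y => ?_⟩
  rw [hx2 x y, heq y, hfq y]

end
end SOSaux13

/-- every 3×3 PSD symmetric biquadratic form is SOS. -/
theorem symmetric_psd_biquadratic_3x3_is_sos
    (A : Fin 3 → Fin 3 → Fin 3 → Fin 3 → ℝ)
    (Q : (Fin 3 → ℝ) → (Fin 3 → ℝ) → ℝ)
    (hQ : ∀ x y, Q x y = ∑ i, ∑ k, ∑ j, ∑ l, A i j k l * x i * x k * y j * y l)
    (hsymx : ∀ (σ : Equiv.Perm (Fin 3)) (x y : Fin 3 → ℝ),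
        Q (fun i => x (σ i)) y = Q x y)
    (hsymy : ∀ (τ : Equiv.Perm (Fin 3)) (x y : Fin 3 → ℝ),
        Q x (fun j => y (τ j)) = Q x y)
    (hpsd : ∀ x y, 0 ≤ Q x y) :
    ∃ (r : ℕ) (w : Fin r → Fin 3 → Fin 3 → ℝ), ∀ (x y : Fin 3 → ℝ),
      Q x y = ∑ p, (∑ i, ∑ j, w p i j * x i * y j) ^ 2 := by
  obtain ⟨a, b, c, d, hst⟩ := SOSaux13.structure_lemma A Q hQ hsymx hsymy
  -- nonnegativity of the cone coordinates
  have e1 : (Fin 3 → ℝ) := ![1, -1, 0]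
  have hk1 : 0 ≤ a := by
    have h := hpsd ![1, -1, 0] ![1, -1, 0]
    rw [hst] at h
    simp only [SOSaux13.pP, SOSaux13.sS, Matrix.cons_val_zero, Matrix.cons_val_one,
      Matrix.head_cons, Matrix.cons_val_two, Matrix.tail_cons] at h
    nlinarith
  have hk2 : 0 ≤ (a + 3 * b) / 3 := by
    have h := hpsd ![1, -1, 0] ![1, 1, 1]
    rw [hst] at h
    simp only [SOSaux13.pP, SOSaux13.sS, Matrix.cons_val_zero, Matrix.cons_val_one,
      Matrix.head_cons, Matrix.cons_val_two, Matrix.tail_cons] at h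
    nlinarith
  have hk3 : 0 ≤ (a + 3 * c) / 3 := by
    have h := hpsd ![1, 1, 1] ![1, -1, 0]
    rw [hst] at h
    simp only [SOSaux13.pP, SOSaux13.sS, Matrix.cons_val_zero, Matrix.cons_val_one,
      Matrix.head_cons, Matrix.cons_val_two, Matrix.tail_cons] at h
    nlinarith
  have hk4 : 0 ≤ (a + 3 * b + 3 * c + 9 * d) / 9 := by
    have h := hpsd ![1, 1, 1] ![1, 1, 1]
    rw [hst] at h
    simp only [SOSaux13.pP, SOSaux13.sS, Matrix.cons_val_zero, Matrix.cons_val_one,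
      Matrix.head_cons, Matrix.cons_val_two, Matrix.tail_cons] at h
    nlinarith
  set s1 : ℝ := Real.sqrt a with hs1d
  set s2 : ℝ := Real.sqrt ((a + 3 * b) / 3) with hs2d
  set s3 : ℝ := Real.sqrt ((a + 3 * c) / 3) with hs3d
  set s4 : ℝ := Real.sqrt ((a + 3 * b + 3 * c + 9 * d) / 9) with hs4d
  have hs1 : s1 ^ 2 = a := Real.sq_sqrt hk1
  have hs2 : s2 ^ 2 = (a + 3 * b) / 3 := Real.sq_sqrt hk2
  have hs3 : s3 ^ 2 = (a + 3 * c) / 3 := Real.sq_sqrt hk3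
  have hs4 : s4 ^ 2 = (a + 3 * b + 3 * c + 9 * d) / 9 := Real.sq_sqrt hk4
  -- centered coefficients: cc i a = δ_{ia} - 1/3
  set cc : Fin 3 → Fin 3 → ℝ :=
    ![![2/3, -1/3, -1/3], ![-1/3, 2/3, -1/3], ![-1/3, -1/3, 2/3]] with hcc
  refine ⟨16, ![
    fun i j => s1 * cc 0 i * cc 0 j,
    fun i j => s1 * cc 0 i * cc 1 j,
    fun i j => s1 * cc 0 i * cc 2 j,
    fun i j => s1 * cc 1 i * cc 0 j,
    fun i j => s1 * cc 1 i * cc 1 j,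
    fun i j => s1 * cc 1 i * cc 2 j,
    fun i j => s1 * cc 2 i * cc 0 j,
    fun i j => s1 * cc 2 i * cc 1 j,
    fun i j => s1 * cc 2 i * cc 2 j,
    fun i _ => s2 * cc 0 i,
    fun i _ => s2 * cc 1 i,
    fun i _ => s2 * cc 2 i,
    fun _ j => s3 * cc 0 j,
    fun _ j => s3 * cc 1 j,
    fun _ j => s3 * cc 2 j,
    fun _ _ => s4], fun x y => ?_⟩
  rw [hst x y]
  simp only [hcc, Fin.sum_univ_succ, Fin.sum_univ_zero, Fin.succ_zero_eq_one,
    Fin.succ_one_eq_two, Matrix.cons_val_zero, Matrix.cons_val_one, Matrix.head_cons,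
    Matrix.cons_val_two, Matrix.tail_cons, Matrix.cons_val_succ, SOSaux13.pP, SOSaux13.sS]
  linear_combination
    (-(((x 0 ^ 2 + x 1 ^ 2 + x 2 ^ 2) - (x 0 + x 1 + x 2) ^ 2 / 3)
        * ((y 0 ^ 2 + y 1 ^ 2 + y 2 ^ 2) - (y 0 + y 1 + y 2) ^ 2 / 3)) * hs1)
    - (((x 0 ^ 2 + x 1 ^ 2 + x 2 ^ 2) - (x 0 + x 1 + x 2) ^ 2 / 3)
        * (y 0 + y 1 + y 2) ^ 2) * hs2
    - ((x 0 + x 1 + x 2) ^ 2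
        * ((y 0 ^ 2 + y 1 ^ 2 + y 2 ^ 2) - (y 0 + y 1 + y 2) ^ 2 / 3)) * hs3
    - ((x 0 + x 1 + x 2) ^ 2 * (y 0 + y 1 + y 2) ^ 2) * hs4
end

section
/- Let P be the 4×3 monic symmetric biquadratic form (m = 4, n = 3) with parameters a, b, c ∈ ℝ. Then P(x,y) ≥ 0 for all x ∈ ℝ⁴, y ∈ ℝ³ if and only if 1 − b + 3(a − c) ≥ 0, 1 − a + 2(b − c) ≥ 0, 1 − a − b + c ≥ 0, and 1 + 3a + 2b + 6c ≥ 0. -/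
open Finset

lemma expand43 (a b c : ℝ) (x : Fin 4 → ℝ) (y : Fin 3 → ℝ) :
    monicForm 4 3 a b c x y =
      (1-a-b+c) * (∑ i, x i^2) * (∑ j, y j^2)
      + (a-c) * (∑ i, x i)^2 * (∑ j, y j^2)
      + (b-c) * (∑ i, x i^2) * (∑ j, y j)^2
      + c * (∑ i, x i)^2 * (∑ j, y j)^2 := by
  simp [monicForm, Fin.sum_univ_four, Fin.sum_univ_three]
  ring

lemma key43 (A B C D u v s t : ℝ) (hu : 0 ≤ u) (hs : 0 ≤ s) (hv : 0 ≤ v) (ht : 0 ≤ t)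
    (hv4 : v ≤ 4*u) (ht3 : t ≤ 3*s)
    (h1 : 0 ≤ A) (h2 : 0 ≤ A + 4*B) (h3 : 0 ≤ A + 3*C) (h4 : 0 ≤ A + 4*B + 3*C + 12*D) :
    0 ≤ A*u*s + B*v*s + C*u*t + D*v*t := by
  rcases eq_or_lt_of_le hu with h | hu'
  · have hv0 : v = 0 := le_antisymm (by linarith) hv
    rw [← h, hv0]; ring_nf; exact le_refl 0
  rcases eq_or_lt_of_le hs with h | hs'
  · have ht0 : t = 0 := le_antisymm (by linarith) ht
    rw [← h, ht0]; ring_nf; exact le_refl 0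
  have hpos : 0 < 12*u*s := by positivity
  have hQ : 0 ≤ 12*u*s*(A*u*s + B*v*s + C*u*t + D*v*t) := by
    have hid : 12*u*s*(A*u*s + B*v*s + C*u*t + D*v*t)
        = A*(u*s*((4*u-v)*(3*s-t))) + (A+4*B)*(u*s*(v*(3*s-t))) + (A+3*C)*(u*s*((4*u-v)*t))
          + (A+4*B+3*C+12*D)*(u*s*(v*t)) := by ring
    rw [hid]
    have hus : 0 ≤ u*s := mul_nonneg hu hs
    have n1 : 0 ≤ (4*u-v)*(3*s-t) := mul_nonneg (by linarith) (by linarith)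
    have n2 : 0 ≤ v*(3*s-t) := mul_nonneg hv (by linarith)
    have n3 : 0 ≤ (4*u-v)*t := mul_nonneg (by linarith) ht
    have n4 : 0 ≤ v*t := mul_nonneg hv ht
    have := mul_nonneg h1 (mul_nonneg hus n1)
    have := mul_nonneg h2 (mul_nonneg hus n2)
    have := mul_nonneg h3 (mul_nonneg hus n3)
    have := mul_nonneg h4 (mul_nonneg hus n4)
    linarith
  nlinarith [hQ, hpos]

/-- PSD characterization for the 4×3 monic symmetric biquadratic form. -/
theorem monic_symmetric_psd_iff_4x3 (a b c : ℝ) :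
    (∀ (x : Fin 4 → ℝ) (y : Fin 3 → ℝ), 0 ≤ monicForm 4 3 a b c x y) ↔
      (1 - b + 3 * (a - c) ≥ 0 ∧
       1 - a + 2 * (b - c) ≥ 0 ∧
       1 - a - b + c ≥ 0 ∧
       1 + 3 * a + 2 * b + 6 * c ≥ 0) := by
  constructor
  · intro hP
    have e1 := hP ![1,1,1,1] ![1,-1,0]
    have e2 := hP ![1,-1,0,0] ![1,1,1]
    have e3 := hP ![1,-1,0,0] ![1,-1,0]
    have e4 := hP ![1,1,1,1] ![1,1,1]
    rw [expand43] at e1 e2 e3 e4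
    simp [Fin.sum_univ_succ] at e1 e2 e3 e4
    norm_num at e1 e2 e3 e4
    refine ⟨by linarith, by linarith, by linarith, by linarith⟩
  · rintro ⟨h1, h2, h3, h4⟩ x y
    rw [expand43]
    have hv4 : (∑ i, x i)^2 ≤ 4 * (∑ i, x i^2) := by
      simp only [Fin.sum_univ_four]
      nlinarith [sq_nonneg (x 0 - x 1), sq_nonneg (x 0 - x 2), sq_nonneg (x 0 - x 3),
        sq_nonneg (x 1 - x 2), sq_nonneg (x 1 - x 3), sq_nonneg (x 2 - x 3)]
    have ht3 : (∑ j, y j)^2 ≤ 3 * (∑ j, y j^2) := by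
      simp only [Fin.sum_univ_three]
      nlinarith [sq_nonneg (y 0 - y 1), sq_nonneg (y 0 - y 2), sq_nonneg (y 1 - y 2)]
    exact key43 (1-a-b+c) (a-c) (b-c) c (∑ i, x i^2) ((∑ i, x i)^2) (∑ j, y j^2) ((∑ j, y j)^2)
      (by positivity) (by positivity) (sq_nonneg _) (sq_nonneg _) hv4 ht3
      (by linarith) (by linarith) (by linarith) (by linarith)
end

section
/- Let P be the 4×4 monic symmetric biquadratic form (m = n = 4) with parameters a, b, c ∈ ℝ. Then P(x,y) ≥ 0 for all x, y ∈ ℝ⁴ if and only if 1 − b + 3(a − c) ≥ 0, 1 − a + 3(b − c) ≥ 0, 1 − a − b + c ≥ 0, and 1 + 3a + 3b + 9c ≥ 0. -/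
open Finset

lemma form_eq (a b c : ℝ) (x y : Fin 4 → ℝ) :
    monicForm 4 4 a b c x y =
      (1 - a - b + c) * ((x 0)^2 + (x 1)^2 + (x 2)^2 + (x 3)^2) * ((y 0)^2 + (y 1)^2 + (y 2)^2 + (y 3)^2)
      + (a - c) * (x 0 + x 1 + x 2 + x 3)^2 * ((y 0)^2 + (y 1)^2 + (y 2)^2 + (y 3)^2)
      + (b - c) * ((x 0)^2 + (x 1)^2 + (x 2)^2 + (x 3)^2) * (y 0 + y 1 + y 2 + y 3)^2
      + c * (x 0 + x 1 + x 2 + x 3)^2 * (y 0 + y 1 + y 2 + y 3)^2 := by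
  simp [monicForm, Fin.sum_univ_four]
  ring

/-- PSD characterization for the 4×4 monic symmetric biquadratic form. -/
theorem monic_symmetric_psd_iff_4x4 (a b c : ℝ) :
    (∀ (x y : Fin 4 → ℝ), 0 ≤ monicForm 4 4 a b c x y) ↔
      (1 - b + 3 * (a - c) ≥ 0 ∧
       1 - a + 3 * (b - c) ≥ 0 ∧
       1 - a - b + c ≥ 0 ∧
       1 + 3 * a + 3 * b + 9 * c ≥ 0) := by
  constructor
  · intro h
    have h1 := h ![1,1,1,1] ![1,-1,0,0]
    have h2 := h ![1,-1,0,0] ![1,1,1,1]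
    have h3 := h ![1,-1,0,0] ![1,-1,0,0]
    have h4 := h ![1,1,1,1] ![1,1,1,1]
    rw [form_eq] at h1 h2 h3 h4
    norm_num [Matrix.cons_val_zero, Matrix.cons_val_one, Matrix.cons_val_two, Matrix.cons_val_three] at h1 h2 h3 h4
    refine ⟨by linarith, by linarith, by linarith, by linarith⟩
  · rintro ⟨hB, hC, hA, hD⟩ x y
    rw [form_eq]
    set X := (x 0)^2 + (x 1)^2 + (x 2)^2 + (x 3)^2 with hX
    set Y := (y 0)^2 + (y 1)^2 + (y 2)^2 + (y 3)^2 with hY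
    set U := (x 0 + x 1 + x 2 + x 3)^2 with hU
    set V := (y 0 + y 1 + y 2 + y 3)^2 with hV
    have hU0 : 0 ≤ U := sq_nonneg _
    have hV0 : 0 ≤ V := sq_nonneg _
    have hUX : U ≤ 4 * X := by
      rw [hU, hX]
      nlinarith [sq_nonneg (x 0 - x 1), sq_nonneg (x 0 - x 2), sq_nonneg (x 0 - x 3),
        sq_nonneg (x 1 - x 2), sq_nonneg (x 1 - x 3), sq_nonneg (x 2 - x 3)]
    have hVY : V ≤ 4 * Y := by
      rw [hV, hY]
      nlinarith [sq_nonneg (y 0 - y 1), sq_nonneg (y 0 - y 2), sq_nonneg (y 0 - y 3),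
        sq_nonneg (y 1 - y 2), sq_nonneg (y 1 - y 3), sq_nonneg (y 2 - y 3)]
    have p1 : 0 ≤ (1 - a - b + c) * ((4 * X - U) * (4 * Y - V)) :=
      mul_nonneg hA (mul_nonneg (by linarith) (by linarith))
    have p2 : 0 ≤ (1 - b + 3 * (a - c)) * (U * (4 * Y - V)) :=
      mul_nonneg hB (mul_nonneg hU0 (by linarith))
    have p3 : 0 ≤ (1 - a + 3 * (b - c)) * ((4 * X - U) * V) :=
      mul_nonneg hC (mul_nonneg (by linarith) hV0)
    have p4 : 0 ≤ (1 + 3 * a + 3 * b + 9 * c) * (U * V) :=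
      mul_nonneg hD (mul_nonneg hU0 hV0)
    have key : 16 * ((1 - a - b + c) * X * Y + (a - c) * U * Y + (b - c) * X * V + c * U * V)
        = (1 - a - b + c) * ((4 * X - U) * (4 * Y - V))
        + (1 - b + 3 * (a - c)) * (U * (4 * Y - V))
        + (1 - a + 3 * (b - c)) * ((4 * X - U) * V)
        + (1 + 3 * a + 3 * b + 9 * c) * (U * V) := by ring
    linarith [p1, p2, p3, p4, key]
end

section
/- Let m, n ≥ 2, let d, a, b, c ∈ ℝ, and let Q(x,y) = d ∑_{i=1}^m ∑_{j=1}^n x_i² y_j² + a ∑_{i≠k} ∑_{j=1}^n x_i x_k y_j² + b ∑_{i=1}^m ∑_{j≠l} x_i² y_j y_l + c ∑_{i≠k} ∑_{j≠l} x_i y_j x_k y_l. If d = 0 and Q(x,y) ≥ 0 for all x ∈ ℝ^m, y ∈ ℝ^n, then a = b = c = 0, i.e., Q is identically zero. -/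
open Finset

lemma offdiag_sum {m : ℕ} (x : Fin m → ℝ) :
    (∑ i, ∑ k, (if i ≠ k then x i * x k else 0)) =
      (∑ i, x i) ^ 2 - ∑ i, (x i) ^ 2 := by
  have h : ∀ i : Fin m, (∑ k, (if i ≠ k then x i * x k else 0)) =
      x i * (∑ k, x k) - (x i) ^ 2 := by
    intro i
    have : (∑ k, (if i ≠ k then x i * x k else 0)) =
        ∑ k, (x i * x k - if i = k then x i * x k else 0) := by
      apply Finset.sum_congr rfl
      intro k _
      by_cases h : i = k <;> simp [h]
    rw [this, Finset.sum_sub_distrib, ← Finset.mul_sum, Finset.sum_ite_eq]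
    simp [pow_two]
  rw [Finset.sum_congr rfl fun i _ => h i, Finset.sum_sub_distrib,
    ← Finset.sum_mul, pow_two]

lemma two_point_sum {m : ℕ} (hm : 2 ≤ m) (s t : ℝ) (f : ℝ → ℝ) (hf : f 0 = 0) :
    (∑ i : Fin m, f (if i = (⟨0, by omega⟩ : Fin m) then s
        else if i = (⟨1, by omega⟩ : Fin m) then t else 0)) = f s + f t := by
  have hne : (⟨0, by omega⟩ : Fin m) ≠ (⟨1, by omega⟩ : Fin m) := by
    simp [Fin.ext_iff]
  rw [Fintype.sum_eq_add (⟨0, by omega⟩ : Fin m) (⟨1, by omega⟩ : Fin m) hne]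
  · simp [hne]
  · intro i ⟨h0, h1⟩
    simp [h0, h1, hf]

/-- if the diagonal coefficient d is zero and the symmetric biquadratic form
is PSD, then a = b = c = 0, i.e., the form is identically zero. -/
theorem zero_diagonal_psd_implies_zero (m n : ℕ) (hm : 2 ≤ m) (hn : 2 ≤ n)
    (d a b c : ℝ)
    (Q : (Fin m → ℝ) → (Fin n → ℝ) → ℝ)
    (hQ : ∀ (x : Fin m → ℝ) (y : Fin n → ℝ),
        Q x y = d * (∑ i, ∑ j, (x i) ^ 2 * (y j) ^ 2)
          + a * ∑ i, ∑ k, ∑ j, (if i ≠ k then x i * x k * (y j) ^ 2 else 0)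
          + b * ∑ i, ∑ j, ∑ l, (if j ≠ l then (x i) ^ 2 * y j * y l else 0)
          + c * ∑ i, ∑ k, ∑ j, ∑ l, (if i ≠ k ∧ j ≠ l then x i * y j * x k * y l else 0))
    (hd : d = 0)
    (hpsd : ∀ x y, 0 ≤ Q x y) :
    a = 0 ∧ b = 0 ∧ c = 0 := by
  -- rewrite Q in factored form
  have key : ∀ (x : Fin m → ℝ) (y : Fin n → ℝ),
      Q x y = a * (((∑ i, x i) ^ 2 - ∑ i, (x i) ^ 2) * ∑ j, (y j) ^ 2)
        + b * ((∑ i, (x i) ^ 2) * ((∑ j, y j) ^ 2 - ∑ j, (y j) ^ 2))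
        + c * (((∑ i, x i) ^ 2 - ∑ i, (x i) ^ 2) *
            ((∑ j, y j) ^ 2 - ∑ j, (y j) ^ 2)) := by
    intro x y
    rw [hQ, hd]
    have ha : (∑ i, ∑ k, ∑ j, (if i ≠ k then x i * x k * (y j) ^ 2 else 0)) =
        ((∑ i, x i) ^ 2 - ∑ i, (x i) ^ 2) * ∑ j, (y j) ^ 2 := by
      rw [← offdiag_sum x, Finset.sum_mul]
      apply Finset.sum_congr rfl; intro i _
      rw [Finset.sum_mul]
      apply Finset.sum_congr rfl; intro k _
      by_cases h : i = k
      · simp [h]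
      · simp [h, Finset.mul_sum]
    have hb : (∑ i, ∑ j, ∑ l, (if j ≠ l then (x i) ^ 2 * y j * y l else 0)) =
        (∑ i, (x i) ^ 2) * ((∑ j, y j) ^ 2 - ∑ j, (y j) ^ 2) := by
      rw [← offdiag_sum y, Finset.sum_mul]
      apply Finset.sum_congr rfl; intro i _
      rw [Finset.mul_sum]
      apply Finset.sum_congr rfl; intro j _
      rw [Finset.mul_sum]
      apply Finset.sum_congr rfl; intro l _
      by_cases h : j = l <;> simp [h] <;> ring
    have hc : (∑ i, ∑ k, ∑ j, ∑ l,
          (if i ≠ k ∧ j ≠ l then x i * y j * x k * y l else 0)) =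
        ((∑ i, x i) ^ 2 - ∑ i, (x i) ^ 2) * ((∑ j, y j) ^ 2 - ∑ j, (y j) ^ 2) := by
      rw [← offdiag_sum x, ← offdiag_sum y, Finset.sum_mul]
      apply Finset.sum_congr rfl; intro i _
      rw [Finset.sum_mul]
      apply Finset.sum_congr rfl; intro k _
      by_cases h : i = k
      · simp [h]
      · simp only [h, ne_eq, not_false_iff, if_true, true_and, Finset.mul_sum]
        apply Finset.sum_congr rfl; intro j _
        apply Finset.sum_congr rfl; intro l _
        by_cases h' : j = l <;> simp [h'] <;> ring
    rw [ha, hb, hc]; ring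
  -- evaluation at two-point vectors
  have ev : ∀ s t u v : ℝ,
      0 ≤ a * (2 * (s * t)) * (u ^ 2 + v ^ 2)
        + b * (s ^ 2 + t ^ 2) * (2 * (u * v))
        + c * (2 * (s * t)) * (2 * (u * v)) := by
    intro s t u v
    set x : Fin m → ℝ := fun i => if i = (⟨0, by omega⟩ : Fin m) then s
        else if i = (⟨1, by omega⟩ : Fin m) then t else 0 with hx
    set y : Fin n → ℝ := fun j => if j = (⟨0, by omega⟩ : Fin n) then u
        else if j = (⟨1, by omega⟩ : Fin n) then v else 0 with hy
    have hx1 : (∑ i, x i) = s + t := two_point_sum hm s t (fun r => r) rfl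
    have hx2 : (∑ i, (x i) ^ 2) = s ^ 2 + t ^ 2 :=
      two_point_sum hm s t (fun r => r ^ 2) (by norm_num)
    have hy1 : (∑ j, y j) = u + v := two_point_sum hn u v (fun r => r) rfl
    have hy2 : (∑ j, (y j) ^ 2) = u ^ 2 + v ^ 2 :=
      two_point_sum hn u v (fun r => r ^ 2) (by norm_num)
    have := hpsd x y
    rw [key x y, hx1, hx2, hy1, hy2] at this
    calc (0:ℝ) ≤ _ := this
      _ = _ := by ring
  have ha : a = 0 := by
    have h1 := ev 1 1 1 0
    have h2 := ev 1 (-1) 1 0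
    norm_num at h1 h2
    linarith
  have hb : b = 0 := by
    have h1 := ev 1 0 1 1
    have h2 := ev 1 0 1 (-1)
    norm_num at h1 h2
    linarith
  have hc : c = 0 := by
    have h1 := ev 1 1 1 1
    have h2 := ev 1 1 1 (-1)
    rw [ha, hb] at h1 h2
    norm_num at h1 h2
    linarith
  exact ⟨ha, hb, hc⟩
end

section
/- Let m, n ≥ 2 and let A = (a_{ijkl}) be the m×n monic completely symmetric biquadratic tensor with parameters a, b, c ∈ ℝ. Let x = (1/√m)(1,…,1) ∈ ℝ^m and y = (1/√n)(1,…,1) ∈ ℝ^n, and let λ = 1 + (m−1)a + (n−1)b + (m−1)(n−1)c. Then λ is an M-eigenvalue of A with M-eigenvectors x and y: for every i ∈ {1,…,m}, ∑_{k=1}^m ∑_{j,l=1}^n a_{ijkl} y_j x_k y_l = λ x_i, and for every j ∈ {1,…,n}, ∑_{i,k=1}^m ∑_{l=1}^n a_{ijkl} x_i x_k y_l = λ y_j. -/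
lemma sum_ite_fin (N : ℕ) (j : Fin N) (u v : ℝ) :
    ∑ l : Fin N, (if j = l then u else v) = u + ((N : ℝ) - 1) * v := by
  have h : ∀ l : Fin N, (if j = l then u else v) = (if j = l then (u - v) else 0) + v := by
    intro l; split <;> ring
  simp [h, Finset.sum_add_distrib, Finset.sum_ite_eq, Finset.card_univ]
  ring

/-- λ = 1 + (m−1)a + (n−1)b + (m−1)(n−1)c is an M-eigenvalue of the monic
completely symmetric biquadratic tensor, with the normalized all-ones M-eigenvectors. -/
theorem monic_tensor_M_eigenvalue (m n : ℕ) (hm : 2 ≤ m) (hn : 2 ≤ n) (a b c : ℝ)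
    (A : Fin m → Fin n → Fin m → Fin n → ℝ)
    (hA : ∀ i j k l, A i j k l =
        if i = k then (if j = l then 1 else b) else (if j = l then a else c))
    (x : Fin m → ℝ) (hx : ∀ i, x i = 1 / Real.sqrt m)
    (y : Fin n → ℝ) (hy : ∀ j, y j = 1 / Real.sqrt n)
    (lam : ℝ)
    (hlam : lam = 1 + ((m : ℝ) - 1) * a + ((n : ℝ) - 1) * b
        + ((m : ℝ) - 1) * ((n : ℝ) - 1) * c) :
    (∀ i, ∑ k, ∑ j, ∑ l, A i j k l * y j * x k * y l = lam * x i) ∧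
    (∀ j, ∑ i, ∑ k, ∑ l, A i j k l * x i * x k * y l = lam * y j) := by
  have hmpos : (0 : ℝ) < m := by exact_mod_cast lt_of_lt_of_le (by norm_num) hm
  have hnpos : (0 : ℝ) < n := by exact_mod_cast lt_of_lt_of_le (by norm_num) hn
  have hsm : Real.sqrt m * Real.sqrt m = m := Real.mul_self_sqrt hmpos.le
  have hsn : Real.sqrt n * Real.sqrt n = n := Real.mul_self_sqrt hnpos.le
  have hsmne : Real.sqrt m ≠ 0 := by positivity
  have hsnne : Real.sqrt n ≠ 0 := by positivity
  set rm : ℝ := 1 / Real.sqrt m with hrm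
  set rn : ℝ := 1 / Real.sqrt n with hrn
  constructor
  · intro i
    have h1 : ∀ (k : Fin m) (j : Fin n),
        ∑ l, A i j k l * y j * x k * y l
          = (if i = k then (1 + ((n : ℝ) - 1) * b) else (a + ((n : ℝ) - 1) * c))
            * (rn * rm * rn) := by
      intro k j
      have : ∀ l : Fin n, A i j k l * y j * x k * y l
          = (if j = l then (if i = k then (1:ℝ) else a) else (if i = k then b else c))
            * (rn * rm * rn) := by
        intro l
        rw [hA, hx, hy, hy]
        split <;> split <;> ring
      rw [Finset.sum_congr rfl (fun l _ => this l), ← Finset.sum_mul, sum_ite_fin]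
      congr 1
      split <;> ring
    calc ∑ k, ∑ j, ∑ l, A i j k l * y j * x k * y l
        = ∑ k : Fin m, (n : ℝ) *
            ((if i = k then (1 + ((n : ℝ) - 1) * b) else (a + ((n : ℝ) - 1) * c))
              * (rn * rm * rn)) := by
          refine Finset.sum_congr rfl fun k _ => ?_
          rw [Finset.sum_congr rfl (fun j _ => h1 k j), Finset.sum_const,
            Finset.card_univ, Fintype.card_fin, nsmul_eq_mul]
      _ = (∑ k : Fin m, (if i = k then (1 + ((n : ℝ) - 1) * b) else (a + ((n : ℝ) - 1) * c)))
            * ((n : ℝ) * (rn * rm * rn)) := by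
          rw [Finset.sum_mul]; refine Finset.sum_congr rfl fun k _ => ?_; ring
      _ = ((1 + ((n : ℝ) - 1) * b) + ((m : ℝ) - 1) * (a + ((n : ℝ) - 1) * c))
            * ((n : ℝ) * (rn * rm * rn)) := by rw [sum_ite_fin]
      _ = lam * x i := by
          rw [hx i, hlam, hrn, hrm]
          field_simp
          ring_nf
          rw [show Real.sqrt n ^ 2 = (n:ℝ) by rw [sq]; exact hsn]
          ring
  · intro j
    have h1 : ∀ (i k : Fin m),
        ∑ l, A i j k l * x i * x k * y l
          = (if i = k then (1 + ((n : ℝ) - 1) * b) else (a + ((n : ℝ) - 1) * c))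
            * (rm * rm * rn) := by
      intro i k
      have : ∀ l : Fin n, A i j k l * x i * x k * y l
          = (if j = l then (if i = k then (1:ℝ) else a) else (if i = k then b else c))
            * (rm * rm * rn) := by
        intro l
        rw [hA, hx, hx, hy]
        split <;> split <;> ring
      rw [Finset.sum_congr rfl (fun l _ => this l), ← Finset.sum_mul, sum_ite_fin]
      congr 1
      split <;> ring
    calc ∑ i, ∑ k, ∑ l, A i j k l * x i * x k * y l
        = ∑ i : Fin m, (∑ k : Fin m,
            (if i = k then (1 + ((n : ℝ) - 1) * b) else (a + ((n : ℝ) - 1) * c)))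
            * (rm * rm * rn) := by
          refine Finset.sum_congr rfl fun i _ => ?_
          rw [Finset.sum_congr rfl (fun k _ => h1 i k), ← Finset.sum_mul]
      _ = ∑ i : Fin m, ((1 + ((n : ℝ) - 1) * b) + ((m : ℝ) - 1) * (a + ((n : ℝ) - 1) * c))
            * (rm * rm * rn) := by
          refine Finset.sum_congr rfl fun i _ => ?_
          rw [sum_ite_fin]
      _ = (m : ℝ) * (((1 + ((n : ℝ) - 1) * b) + ((m : ℝ) - 1) * (a + ((n : ℝ) - 1) * c))
            * (rm * rm * rn)) := by
          rw [Finset.sum_const, Finset.card_univ, Fintype.card_fin, nsmul_eq_mul]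
      _ = lam * y j := by
          rw [hy j, hlam, hrn, hrm]
          field_simp
          ring_nf
          rw [show Real.sqrt m ^ 2 = (m:ℝ) by rw [sq]; exact hsm]
          ring
end
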